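/- arXiv:math/0205189 — 8 statements merged into one kernel-verified Lean document; each statement's English description precedes it below -/
import Mathlib

section
/- Let B be a bead (viewed as a row-stochastic transition matrix on {0,1,…,b}), let π be the stationary distribution of its closure B̄, and let μ be the expected first passage time from 0 to b in B. Then for any state k ≠ b of B, Σ_{a ≥ 0} B^a(0,k) = π(k)(μ+1), where B^a(0,k) denotes the (0,k) entry of the a-th matrix power of B. -/
open Matrix

/-- A row-stochastic matrix. -/
def RowStochastic {S : Type*} [Fintype S] (P : Matrix S S ℝ) : Prop :=
  (∀ i j, 0 ≤ P i j) ∧ ∀ i, ∑ j, P i j = 1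

/-- `fpt b P t` is the probability that the first passage time from state `0` to the
absorbing state `b` (i.e. `Fin.last b`) equals `t`. -/
noncomputable def fpt (b : ℕ) (P : Matrix (Fin (b + 1)) (Fin (b + 1)) ℝ) : ℕ → ℝ
  | 0 => 0
  | t + 1 => (P ^ (t + 1)) 0 (Fin.last b) - (P ^ t) 0 (Fin.last b)

/-- A bead: a chain on `{0,…,b}` whose only absorbing state is `b`, in which every state
lies on a path from `0` to `b`, and whose first passage time distribution from `0` to `b`
has minimal span `1`. -/
def IsBead (b : ℕ) (P : Matrix (Fin (b + 1)) (Fin (b + 1)) ℝ) : Prop :=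
  RowStochastic P ∧
  (∀ j, P (Fin.last b) j = if j = Fin.last b then 1 else 0) ∧
  (∀ i, P i i = 1 → i = Fin.last b) ∧
  (∀ i, (∃ t, 0 < (P ^ t) 0 i) ∧ (∃ t, 0 < (P ^ t) i (Fin.last b))) ∧
  (∀ d : ℕ, 0 < d →
    (∀ t₁ t₂ : ℕ, fpt b P t₁ ≠ 0 → fpt b P t₂ ≠ 0 → (d : ℤ) ∣ ((t₂ : ℤ) - (t₁ : ℤ))) →
    d = 1)

/-- The closure `B̄` of a bead `B`: identical to `B` except `B̄(b,0) = 1`. -/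
noncomputable def beadClosure (b : ℕ) (P : Matrix (Fin (b + 1)) (Fin (b + 1)) ℝ) :
    Matrix (Fin (b + 1)) (Fin (b + 1)) ℝ :=
  Matrix.of fun i j => if i = Fin.last b then (if j = 0 then 1 else 0) else P i j

/-- `π` is a stationary distribution of the chain `P`. -/
def IsStationaryDistrib {S : Type*} [Fintype S] (P : Matrix S S ℝ) (π : S → ℝ) : Prop :=
  (∀ s, 0 ≤ π s) ∧ (∑ s, π s = 1) ∧ ∀ s', ∑ s, π s * P s s' = π s'

/-!
Let `Q` be the bead killed on hitting `b`. It is substochastic, and every state leaks mass into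
`b` within a bounded time, so `Qⁿ → 0` geometrically. Stationarity of `π` for the closure `B̄`
says that `π` with its `b`-entry set to `0` satisfies `x = x Q + π(b) e₀`; unrolling this
fixed-point equation gives `π(k) = π(b) ∑ₐ Bᵃ(0,k)` for `k ≠ b`. Summing over `k ≠ b` turns
the right side into `π(b)` times the sum of the survival probabilities `∑ₐ P(first passage > a)`,
which is `π(b) μ` by the tail-sum formula; hence `π(b) (μ + 1) = 1`.
-/

open Filter Topology

namespace Matrix

section Substochastic

variable {S : Type*} [Fintype S] {Q : Matrix S S ℝ}

lemma mulVec_mono_of_nonneg (hQ : ∀ i j, 0 ≤ Q i j) {v w : S → ℝ} (h : v ≤ w) :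
    Q *ᵥ v ≤ Q *ᵥ w := fun i =>
  Finset.sum_le_sum fun j _ => mul_le_mul_of_nonneg_left (h j) (hQ i j)

variable [DecidableEq S]

lemma eq_vecMul_pow_add_sum {x v : S → ℝ} (hx : x = x ᵥ* Q + v) (n : ℕ) :
    x = x ᵥ* Q ^ n + ∑ a ∈ Finset.range n, v ᵥ* Q ^ a := by
  induction n with
  | zero => simp
  | succ n ih =>
    conv_lhs => rw [ih]
    conv_lhs => rw [hx]
    rw [add_vecMul, vecMul_vecMul, ← pow_succ', Finset.sum_range_succ]
    abel

variable (hQ : ∀ i j, 0 ≤ Q i j)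
include hQ

lemma pow_mul_mulVec_one_le {T : ℕ} {c : ℝ} (hc : 0 ≤ c) (hT : Q ^ T *ᵥ 1 ≤ c • 1)
    (k : ℕ) : Q ^ (T * k) *ᵥ 1 ≤ c ^ k • 1 := by
  induction k with
  | zero => simp
  | succ k ih =>
    calc Q ^ (T * (k + 1)) *ᵥ 1 = Q ^ (T * k) *ᵥ (Q ^ T *ᵥ 1) := by
          rw [mulVec_mulVec, ← pow_add, mul_add_one]
      _ ≤ Q ^ (T * k) *ᵥ (c • 1) := mulVec_mono_of_nonneg (pow_apply_nonneg hQ _) hT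
      _ = c • (Q ^ (T * k) *ᵥ 1) := mulVec_smul _ _ _
      _ ≤ c • (c ^ k • 1) := smul_le_smul_of_nonneg_left ih hc
      _ = c ^ (k + 1) • 1 := by rw [smul_smul, pow_succ']

theorem hasSum_vecMul_pow_of_eq_vecMul_add {x v : S → ℝ} (hv : 0 ≤ v) (hx : x = x ᵥ* Q + v)
    (hQn : Tendsto (fun n => Q ^ n) atTop (𝓝 0)) : HasSum (fun a => v ᵥ* Q ^ a) x := by
  have hpartial : Tendsto (fun n => ∑ a ∈ Finset.range n, v ᵥ* Q ^ a) atTop (𝓝 x) := by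
    have hlim : Tendsto (fun n => x - x ᵥ* Q ^ n) atTop (𝓝 (x - x ᵥ* 0)) :=
      tendsto_const_nhds.sub
        (((continuous_const.matrix_vecMul continuous_id).tendsto 0).comp hQn)
    rw [vecMul_zero, sub_zero] at hlim
    refine hlim.congr fun n => ?_
    rw [sub_eq_iff_eq_add', ← eq_vecMul_pow_add_sum hx]
  refine Pi.hasSum.2 fun j => (hasSum_iff_tendsto_nat_of_nonneg (fun a => ?_) _).2 ?_
  · exact Finset.sum_nonneg fun i _ => mul_nonneg (hv i) (pow_apply_nonneg hQ a i j)
  · simpa only [Finset.sum_apply] using tendsto_pi_nhds.1 hpartial j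

variable (hQ1 : Q *ᵥ 1 ≤ 1)
include hQ1

lemma antitone_pow_mulVec_one : Antitone fun n => Q ^ n *ᵥ 1 := by
  refine antitone_nat_of_succ_le fun n => ?_
  rw [pow_succ, ← mulVec_mulVec]
  exact mulVec_mono_of_nonneg (pow_apply_nonneg hQ n) hQ1

theorem tendsto_pow_nhds_zero_of_substochastic [Nonempty S]
    (hleak : ∀ i, ∃ t, (Q ^ t *ᵥ 1) i < 1) : Tendsto (fun n => Q ^ n) atTop (𝓝 0) := by
  choose t ht using hleak
  set T := Finset.univ.sup t + 1
  have hleakT : ∀ i, (Q ^ T *ᵥ 1) i < 1 := fun i =>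
    (antitone_pow_mulVec_one hQ hQ1 (Nat.lt_add_one_of_le (Finset.le_sup (Finset.mem_univ i))).le
      i).trans_lt (ht i)
  obtain ⟨i₀, hi₀⟩ := Finite.exists_max fun i => (Q ^ T *ᵥ 1) i
  set c := (Q ^ T *ᵥ 1) i₀
  have hc : 0 ≤ c :=
    Finset.sum_nonneg fun j _ => mul_nonneg (pow_apply_nonneg hQ T i₀ j) zero_le_one
  have hbound : ∀ n i j, (Q ^ n) i j ≤ c ^ (n / T) := fun n i j => calc
    (Q ^ n) i j ≤ (Q ^ n *ᵥ 1) i := by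
      simpa [mulVec, dotProduct] using
        Finset.single_le_sum (fun k _ => pow_apply_nonneg hQ n i k) (Finset.mem_univ j)
    _ ≤ (Q ^ (T * (n / T)) *ᵥ 1) i := antitone_pow_mulVec_one hQ hQ1 (Nat.mul_div_le n T) i
    _ ≤ c ^ (n / T) := by
      simpa using pow_mul_mulVec_one_le hQ hc (fun i => by simpa using hi₀ i) (n / T) i
  have hgeom : Tendsto (fun n => c ^ (n / T)) atTop (𝓝 0) :=
    (tendsto_pow_atTop_nhds_zero_of_lt_one hc (hleakT i₀)).comp
      (Nat.tendsto_div_const_atTop (Nat.add_one_ne_zero _))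
  refine tendsto_pi_nhds.2 fun i => tendsto_pi_nhds.2 fun j => ?_
  exact squeeze_zero (fun n => pow_apply_nonneg hQ n i j) (fun n => hbound n i j) hgeom

end Substochastic

section Killed

variable {S : Type*} [DecidableEq S]

def killedAt (P : Matrix S S ℝ) (z : S) : Matrix S S ℝ :=
  of fun i j => if j = z then 0 else P i j

variable {P : Matrix S S ℝ} {z : S}

@[simp]
lemma killedAt_apply (i j : S) : P.killedAt z i j = if j = z then 0 else P i j := rfl

variable [Fintype S]

lemma vecMul_killedAt_apply (x : S → ℝ) (j : S) :
    (x ᵥ* P.killedAt z) j = if j = z then 0 else (x ᵥ* P) j := by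
  split_ifs with hj <;> simp [vecMul, dotProduct, hj]

lemma killedAt_pow_apply_self {i : S} (hi : i ≠ z) (n : ℕ) : (P.killedAt z ^ n) i z = 0 := by
  cases n with
  | zero => exact one_apply_ne hi
  | succ n => simp [pow_succ, mul_apply]

section RowStochastic

variable (hP : P ∈ rowStochastic ℝ S)
include hP

lemma killedAt_nonneg (i j : S) : 0 ≤ P.killedAt z i j := by
  rw [killedAt_apply]
  split_ifs
  exacts [le_rfl, nonneg_of_mem_rowStochastic hP]

lemma killedAt_mulVec_one_le : P.killedAt z *ᵥ 1 ≤ 1 := fun i => by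
  rw [Pi.one_apply, ← sum_row_of_mem_rowStochastic hP i]
  refine Finset.sum_le_sum fun j _ => ?_
  simp only [killedAt_apply, Pi.one_apply, mul_one]
  split_ifs
  exacts [nonneg_of_mem_rowStochastic hP, le_rfl]

end RowStochastic

variable (hz : ∀ j, j ≠ z → P z j = 0)
include hz

lemma killedAt_pow_apply_of_ne {j : S} (hj : j ≠ z) (n : ℕ) (i : S) :
    (P.killedAt z ^ n) i j = (P ^ n) i j := by
  induction n generalizing j with
  | zero => rfl
  | succ n ih =>
    simp only [pow_succ, mul_apply, killedAt_apply, if_neg hj]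
    refine Finset.sum_congr rfl fun m _ => ?_
    by_cases hm : m = z
    · simp [hm, hz j hj]
    · rw [ih hm]

variable (hP : P ∈ rowStochastic ℝ S)
include hP

lemma killedAt_pow_mulVec_one_of_ne {i : S} (hi : i ≠ z) (n : ℕ) :
    (P.killedAt z ^ n *ᵥ 1) i = 1 - (P ^ n) i z := by
  have hrow := sum_row_of_mem_rowStochastic (pow_mem hP n) i
  rw [← Finset.add_sum_erase _ _ (Finset.mem_univ z)] at hrow
  simp only [mulVec, dotProduct, Pi.one_apply, mul_one]
  rw [← Finset.add_sum_erase _ _ (Finset.mem_univ z), killedAt_pow_apply_self hi, zero_add,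
    Finset.sum_congr rfl fun j hj =>
      killedAt_pow_apply_of_ne hz (Finset.ne_of_mem_erase hj) n i]
  linarith

theorem tendsto_killedAt_pow (hreach : ∀ i, ∃ t, 0 < (P ^ t) i z) :
    Tendsto (fun n => P.killedAt z ^ n) atTop (𝓝 0) := by
  have : Nonempty S := ⟨z⟩
  refine tendsto_pow_nhds_zero_of_substochastic (killedAt_nonneg hP) (killedAt_mulVec_one_le hP)
    fun i => ?_
  by_cases hi : i = z
  · exact ⟨1, by simp +contextual [hi, mulVec, dotProduct, hz]⟩
  · obtain ⟨t, ht⟩ := hreach i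
    exact ⟨t, by rw [killedAt_pow_mulVec_one_of_ne hz hP hi]; linarith⟩

end Killed

end Matrix

lemma Antitone.hasSum_sub_add_one {f : ℕ → ℝ} (hf : Antitone f) (hf0 : Tendsto f atTop (𝓝 0))
    (n : ℕ) : HasSum (fun t => f (t + n) - f (t + 1 + n)) (f n) := by
  refine (hasSum_iff_tendsto_nat_of_nonneg (fun t => sub_nonneg.2 (hf (by omega))) _).2 ?_
  simp_rw [Finset.sum_range_sub' (fun t => f (t + n)), zero_add]
  simpa using tendsto_const_nhds.sub (hf0.comp (tendsto_add_atTop_nat n))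

/-- The tail-sum formula `E T = ∑ₜ P(T > t)`, written for `f t = P(T > t)`. -/
theorem Antitone.hasSum_of_hasSum_mul_sub {f : ℕ → ℝ} {μ : ℝ} (hf : Antitone f)
    (hf0 : Tendsto f atTop (𝓝 0))
    (hμ : HasSum (fun t : ℕ => ((t : ℝ) + 1) * (f t - f (t + 1))) μ) : HasSum f μ := by
  set d := fun t : ℕ => ((t : ℝ) + 1) * (f t - f (t + 1))
  have hf_nonneg : ∀ t, 0 ≤ f t := hf.le_of_tendsto hf0
  have habel : ∀ n, ∑ t ∈ Finset.range n, f t = ∑ t ∈ Finset.range n, d t + n * f n := by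
    intro n
    induction n with
    | zero => simp
    | succ n ih => simp only [Finset.sum_range_succ, ih, d]; push_cast; ring
  -- `n f(n) = ∑_{t ≥ n} n (f t - f (t + 1))` is dominated by the tail of the series for `μ`.
  have hmul_le : ∀ n : ℕ, (n : ℝ) * f n ≤ ∑' t, d (t + n) := fun n => by
    have htel := (hf.hasSum_sub_add_one hf0 n).mul_left (n : ℝ)
    rw [← htel.tsum_eq]
    refine Summable.tsum_le_tsum (fun t => ?_) htel.summable
      ((summable_nat_add_iff n).2 hμ.summable)
    simp only [d, Nat.cast_add, add_right_comm _ 1 n]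
    exact mul_le_mul_of_nonneg_right (by linarith [t.cast_nonneg (α := ℝ)])
      (sub_nonneg.2 (hf (by omega)))
  have hmul : Tendsto (fun n : ℕ => (n : ℝ) * f n) atTop (𝓝 0) :=
    squeeze_zero (fun n => mul_nonneg n.cast_nonneg (hf_nonneg n)) hmul_le (tendsto_sum_nat_add d)
  refine (hasSum_iff_tendsto_nat_of_nonneg hf_nonneg μ).2 ?_
  simpa [habel] using hμ.tendsto_sum_nat.add hmul

lemma RowStochastic.mem_rowStochastic {S : Type*} [Fintype S] [DecidableEq S]
    {P : Matrix S S ℝ} (hP : RowStochastic P) : P ∈ rowStochastic ℝ S :=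
  mem_rowStochastic_iff_sum.2 hP

lemma IsStationaryDistrib.vecMul_eq {S : Type*} [Fintype S] {P : Matrix S S ℝ} {π : S → ℝ}
    (hπ : IsStationaryDistrib P π) : π ᵥ* P = π :=
  funext hπ.2.2

lemma Fin.zero_ne_last_of_pos {n : ℕ} (hn : 0 < n) : (0 : Fin (n + 1)) ≠ Fin.last n := by
  simp [Fin.ext_iff]
  omega

lemma vecMul_beadClosure {b : ℕ} {B : Matrix (Fin (b + 1)) (Fin (b + 1)) ℝ}
    (x : Fin (b + 1) → ℝ) :
    x ᵥ* beadClosure b B =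
      Function.update x (Fin.last b) 0 ᵥ* B + Pi.single 0 (x (Fin.last b)) := by
  ext j
  have hterm : ∀ i, x i * beadClosure b B i j = Function.update x (Fin.last b) 0 i * B i j +
      if i = Fin.last b then (Pi.single 0 (x (Fin.last b)) : Fin (b + 1) → ℝ) j else 0 :=
    fun i => by
      by_cases hi : i = Fin.last b
      · subst hi; simp [beadClosure, Pi.single_apply]
      · simp [beadClosure, hi]
  simp only [vecMul, dotProduct, Pi.add_apply, hterm, Finset.sum_add_distrib, Finset.sum_ite_eq',
    Finset.mem_univ, if_true]

lemma update_last_eq_vecMul_killedAt_add {b : ℕ} (hb : 0 < b)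
    {B : Matrix (Fin (b + 1)) (Fin (b + 1)) ℝ} {π : Fin (b + 1) → ℝ}
    (hπ : π ᵥ* beadClosure b B = π) :
    Function.update π (Fin.last b) 0 =
      Function.update π (Fin.last b) 0 ᵥ* B.killedAt (Fin.last b) +
        Pi.single 0 (π (Fin.last b)) := by
  funext j
  rw [Pi.add_apply, vecMul_killedAt_apply]
  split_ifs with hj
  · subst hj
    simp [(Fin.zero_ne_last_of_pos hb).symm]
  · rw [Function.update_of_ne hj, ← Pi.add_apply, ← vecMul_beadClosure, hπ]

namespace IsBead

variable {b : ℕ} {B : Matrix (Fin (b + 1)) (Fin (b + 1)) ℝ} (hB : IsBead b B)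
include hB

lemma absorbing : ∀ j, j ≠ Fin.last b → B (Fin.last b) j = 0 :=
  fun j hj => by rw [hB.2.1, if_neg hj]

lemma tendsto_killedAt_pow : Tendsto (fun n => B.killedAt (Fin.last b) ^ n) atTop (𝓝 0) :=
  Matrix.tendsto_killedAt_pow hB.absorbing hB.1.mem_rowStochastic fun i => (hB.2.2.2.1 i).2

lemma hasSum_killedAt_pow_mulVec_one (hb : 0 < b) {μ : ℝ}
    (hμ : HasSum (fun t : ℕ => (t : ℝ) * fpt b B t) μ) :
    HasSum (fun a => (B.killedAt (Fin.last b) ^ a *ᵥ 1) 0) μ := by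
  have hrs := hB.1.mem_rowStochastic
  set f : ℕ → ℝ := fun a => (B.killedAt (Fin.last b) ^ a *ᵥ 1) 0
  have hf : ∀ a, f a = 1 - (B ^ a) 0 (Fin.last b) :=
    killedAt_pow_mulVec_one_of_ne hB.absorbing hrs (Fin.zero_ne_last_of_pos hb)
  refine Antitone.hasSum_of_hasSum_mul_sub (fun m n h => antitone_pow_mulVec_one
    (killedAt_nonneg hrs) (killedAt_mulVec_one_le hrs) h 0) ?_ ?_
  · simpa using tendsto_pi_nhds.1
      (((continuous_id.matrix_mulVec continuous_const).tendsto 0).comp hB.tendsto_killedAt_pow) 0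
  · have hterm : ∀ t : ℕ,
        ((t : ℝ) + 1) * (f t - f (t + 1)) = ((t + 1 : ℕ) : ℝ) * fpt b B (t + 1) :=
      fun t => by simp only [hf, fpt]; push_cast; ring
    simp_rw [hterm]
    simpa using (hasSum_nat_add_iff' 1).2 hμ

variable {π : Fin (b + 1) → ℝ} (hb : 0 < b) (hπ : IsStationaryDistrib (beadClosure b B) π)
include hb hπ

theorem hasSum_stationary_mul_killedAt_pow :
    HasSum (fun a => π (Fin.last b) • (B.killedAt (Fin.last b) ^ a).row 0)
      (Function.update π (Fin.last b) 0) := by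
  simpa [single_vecMul] using hasSum_vecMul_pow_of_eq_vecMul_add
    (killedAt_nonneg hB.1.mem_rowStochastic) (Pi.single_nonneg.2 (hπ.1 _))
    (update_last_eq_vecMul_killedAt_add hb hπ.vecMul_eq) hB.tendsto_killedAt_pow

theorem stationary_last_mul_mean_add_one {μ : ℝ}
    (hμ : HasSum (fun t : ℕ => (t : ℝ) * fpt b B t) μ) :
    π (Fin.last b) * (μ + 1) = 1 := by
  have htotal : HasSum (fun a => π (Fin.last b) * (B.killedAt (Fin.last b) ^ a *ᵥ 1) 0)
      (1 - π (Fin.last b)) := by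
    convert hasSum_sum fun j (_ : j ∈ Finset.univ) =>
      Pi.hasSum.1 (hB.hasSum_stationary_mul_killedAt_pow hb hπ) j using 1
    · funext a
      simp [mulVec, dotProduct, Finset.mul_sum]
    · rw [Finset.sum_update_of_mem (Finset.mem_univ _), ← hπ.2.1,
        Finset.sum_eq_add_sum_sdiff_singleton_of_mem (Finset.mem_univ (Fin.last b))]
      ring
  linarith [htotal.unique ((hB.hasSum_killedAt_pow_mulVec_one hb hμ).mul_left _)]

end IsBead

/-- `Σ_{a ≥ 0} B^a(0,k) = π(k)(μ+1)` for `k ≠ b`, where `π` is the stationary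
distribution of the closure `B̄` and `μ` is the mean first passage time from `0` to `b`. -/
theorem stmt3 (b : ℕ) (hb : 0 < b) (B : Matrix (Fin (b + 1)) (Fin (b + 1)) ℝ)
    (hB : IsBead b B)
    (π : Fin (b + 1) → ℝ) (hπ : IsStationaryDistrib (beadClosure b B) π)
    (μ : ℝ) (hμ : HasSum (fun t : ℕ => (t : ℝ) * fpt b B t) μ)
    (k : Fin (b + 1)) (hk : k ≠ Fin.last b) :
    HasSum (fun a : ℕ => (B ^ a) 0 k) (π k * (μ + 1)) := by
  have hlast := hB.stationary_last_mul_mean_add_one hb hπ hμ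
  have hsum : HasSum (fun a => π (Fin.last b) * (B ^ a) 0 k) (π k) := by
    simpa [Function.update_of_ne hk, killedAt_pow_apply_of_ne hB.absorbing hk] using
      Pi.hasSum.1 (hB.hasSum_stationary_mul_killedAt_pow hb hπ) k
  rw [mul_comm]
  exact (hsum.mul_left (μ + 1)).congr_fun fun a => by
    rw [← mul_assoc, mul_comm (μ + 1), hlast, one_mul]
end

section
/- Let P_{n,m} be a necklace chain with n link states and m beads of type B. Let π be the stationary distribution of the closure B̄ and let μ be the expected first passage time from 0 to b in B. Then the stationary distribution π_{n,m} of P_{n,m} is given by: π_{n,m}(s) = (μ+1)π(k)/(n+(μ−1)m) if s = s_{i,k} is a state in a bead (0 ≤ k ≤ b−1), and π_{n,m}(s) = 1/(n+(μ−1)m) if s is a link state not in a bead. -/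
open Matrix

/-- `π` is a stationary distribution of the chain `P`. -/
def IsStationaryVec {S : Type*} [Fintype S] (P : Matrix S S ℝ) (π : S → ℝ) : Prop :=
  (∀ s, 0 ≤ π s) ∧ (∑ s, π s = 1) ∧ ∀ s', ∑ s, π s * P s s' = π s'

/-- `Rcount r i = R_i = Σ_{k<i} r_k`, the number of beads among positions `0,…,i−1`. -/
def Rcount (r : ℕ → Bool) (i : ℕ) : ℕ :=
  ((Finset.range i).filter fun k => r k = true).card

/-- The necklace chain built with bead `B` (on `{0,…,b}`) and indicator vector
`r : {0,…,n−1} → {0,1}`.  Its states are pairs `(i,k)` with `i` a position (`Fin n`) and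
`k < b`: `(i,0)` is the link state `s_i`, and when `r i = 1` the states `(i,k)`,
`0 ≤ k ≤ b−1`, are the states of the bead at position `i`, whose exit `s_{i,b}` is
identified with `s_{i+1} = (i+1 mod n, 0)`.  When `r i = 0` the link state `s_i` moves
deterministically to `s_{i+1}` (and the unused states `(i,k)`, `k ≥ 1`, are junk states
that also move to `s_{i+1}`; no state ever moves into them). -/
noncomputable def necklace (n b : ℕ) (B : Matrix (Fin (b + 1)) (Fin (b + 1)) ℝ)
    (r : ℕ → Bool) : Matrix (Fin n × Fin b) (Fin n × Fin b) ℝ :=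
  Matrix.of fun s s' =>
    if r s.1.val then
      (if s'.1 = s.1 then B s.2.castSucc s'.2.castSucc else 0) +
      (if s'.1.val = (s.1.val + 1) % n ∧ s'.2.val = 0 then B s.2.castSucc (Fin.last b)
        else 0)
    else
      if s'.1.val = (s.1.val + 1) % n ∧ s'.2.val = 0 then 1 else 0

/-!
Kac's formula for the closed bead gives `π(b) (μ + 1) = 1`, once `μ` is identified with the
expected absorption time `∑ₜ P₀(τ > t)` of `B` by the tail-sum formula; the tails decay
geometrically because every state of the bead leads to `b`. With this, the weights `(μ + 1) π(k)`
on the states of each bead and `1` on the bare link states balance at every state: a bead, like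
a bare link, passes one unit of flow on to the next link state. Their total mass is
`n + (μ - 1) m`. For uniqueness, every state leads to every state that is not an unused junk
state, so a maximum principle for the ratio of two stationary distributions forces them to agree.
-/

open Filter Topology Finset

theorem summable_of_add_le_mul {a : ℕ → ℝ} {T : ℕ} {c : ℝ} (hT : 0 < T) (hc₀ : 0 ≤ c)
    (hc₁ : c < 1) (ha : ∀ t, 0 ≤ a t) (h : ∀ t, a (t + T) ≤ c * a t) : Summable a := by
  have : NeZero T := ⟨hT.ne'⟩
  have hblock : ∀ k s, a (k * T + s) ≤ c ^ k * a s := by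
    intro k s
    induction k with
    | zero => simp
    | succ k ih =>
      calc a ((k + 1) * T + s) = a (k * T + s + T) := by ring_nf
        _ ≤ c * a (k * T + s) := h _
        _ ≤ c * (c ^ k * a s) := by gcongr
        _ = c ^ (k + 1) * a s := by ring
  rw [← (Nat.divModEquiv T).symm.summable_iff]
  refine Summable.of_nonneg_of_le (fun p => ha _) (fun p => hblock p.1 p.2)
    ((summable_geometric_of_lt_one hc₀ hc₁).mul_of_nonneg (g := fun s : Fin T => a s)
      Summable.of_finite (fun k => pow_nonneg hc₀ k) (fun s => ha s))

theorem Summable.tendsto_natCast_mul_of_antitone {a : ℕ → ℝ} (hs : Summable a)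
    (ha : Antitone a) : Tendsto (fun n : ℕ => (n : ℝ) * a n) atTop (𝓝 0) := by
  have ha₀ : ∀ n, 0 ≤ a n := ha.le_of_tendsto hs.tendsto_atTop_zero
  set S : ℕ → ℝ := fun n => ∑ t ∈ range n, a t
  have hS : Tendsto S atTop (𝓝 (∑' t, a t)) := hs.hasSum.tendsto_sum_nat
  have hhalf : Tendsto (fun n => S n - S (n / 2)) atTop (𝓝 0) := by
    simpa using hS.sub (hS.comp (Nat.tendsto_div_const_atTop two_ne_zero))
  refine squeeze_zero (fun n => mul_nonneg n.cast_nonneg (ha₀ n)) (fun n => ?_)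
    (by simpa using hhalf.const_mul (2 : ℝ))
  calc (n : ℝ) * a n ≤ 2 * ((n - n / 2 : ℕ) * a n) := by
        rw [← mul_assoc]; gcongr
        · exact ha₀ n
        · exact_mod_cast (by omega : n ≤ 2 * (n - n / 2))
    _ = 2 * ∑ _t ∈ Ico (n / 2) n, a n := by simp
    _ ≤ 2 * ∑ t ∈ Ico (n / 2) n, a t := by
        gcongr with t ht; exact ha (mem_Ico.1 ht).2.le
    _ = 2 * (S n - S (n / 2)) := by rw [sum_Ico_eq_sub _ (Nat.div_le_self n 2)]

section Absorption

variable {S : Type*} [Fintype S] [DecidableEq S] {P : Matrix S S ℝ}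

theorem one_sub_pow_add_apply (hP : P ∈ rowStochastic ℝ S) (s t : ℕ) (i z : S) :
    1 - (P ^ (s + t)) i z = ∑ j, (P ^ s) i j * (1 - (P ^ t) j z) := by
  simp only [mul_sub, mul_one, sum_sub_distrib, pow_add, mul_apply,
    sum_row_of_mem_rowStochastic (pow_mem hP s)]

variable {z : S}

theorem pow_apply_self_of_absorbing (hz : ∀ j, P z j = if j = z then 1 else 0) (t : ℕ) :
    (P ^ t) z z = 1 := by
  induction t with
  | zero => simp
  | succ t ih => simp [pow_succ', mul_apply, hz, ih]

theorem one_sub_pow_apply_le (hP : P ∈ rowStochastic ℝ S)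
    (hz : ∀ j, P z j = if j = z then 1 else 0) (t : ℕ) (j : S) :
    1 - (P ^ t) j z ≤ 1 - (1 : Matrix S S ℝ) j z := by
  by_cases hj : j = z
  · subst hj; simp [pow_apply_self_of_absorbing hz]
  · simpa [one_apply_ne hj] using nonneg_of_mem_rowStochastic (pow_mem hP t)

theorem antitone_one_sub_pow_apply (hP : P ∈ rowStochastic ℝ S)
    (hz : ∀ j, P z j = if j = z then 1 else 0) (i : S) :
    Antitone fun t => 1 - (P ^ t) i z := by
  intro t t' htt'
  obtain ⟨s, rfl⟩ := Nat.exists_eq_add_of_le htt'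
  dsimp only
  rw [one_sub_pow_add_apply hP, ← add_zero t, one_sub_pow_add_apply hP, pow_zero]
  exact sum_le_sum fun j _ =>
    mul_le_mul_of_nonneg_left (one_sub_pow_apply_le hP hz s j)
      (nonneg_of_mem_rowStochastic (pow_mem hP t))

theorem summable_one_sub_pow_apply (hP : P ∈ rowStochastic ℝ S)
    (hz : ∀ j, P z j = if j = z then 1 else 0) (hreach : ∀ i, ∃ t, 0 < (P ^ t) i z)
    (i : S) : Summable fun t => 1 - (P ^ t) i z := by
  have hg := antitone_one_sub_pow_apply hP hz
  obtain ⟨T, hT⟩ : ∃ T, ∀ t ≥ T, ∀ j, 0 < (P ^ t) j z := by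
    refine (Filter.eventually_all.2 fun j => ?_).exists_forall_of_atTop
    obtain ⟨t₀, ht₀⟩ := hreach j
    filter_upwards [Filter.eventually_ge_atTop t₀] with t ht
    linarith [hg j ht]
  have : Nonempty S := ⟨z⟩
  obtain ⟨j₀, hj₀⟩ := Finite.exists_max fun j => 1 - (P ^ (T + 1)) j z
  set c := 1 - (P ^ (T + 1)) j₀ z
  have hstep : ∀ j, 1 - (P ^ (T + 1)) j z ≤ c * (1 - (1 : Matrix S S ℝ) j z) := by
    intro j
    by_cases hj : j = z
    · subst hj; simp [pow_apply_self_of_absorbing hz]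
    · simpa [one_apply_ne hj] using hj₀ j
  refine summable_of_add_le_mul T.succ_pos
    (sub_nonneg.2 (le_one_of_mem_rowStochastic (pow_mem hP _))) (by linarith [hT _ T.le_succ j₀])
    (fun t => sub_nonneg.2 (le_one_of_mem_rowStochastic (pow_mem hP t))) fun t => ?_
  calc 1 - (P ^ (t + (T + 1))) i z = ∑ j, (P ^ t) i j * (1 - (P ^ (T + 1)) j z) :=
        one_sub_pow_add_apply hP _ _ _ _
    _ ≤ ∑ j, (P ^ t) i j * (c * (1 - (1 : Matrix S S ℝ) j z)) :=
        sum_le_sum fun j _ =>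
          mul_le_mul_of_nonneg_left (hstep j) (nonneg_of_mem_rowStochastic (pow_mem hP t))
    _ = c * (1 - (P ^ (t + 0)) i z) := by
        rw [one_sub_pow_add_apply hP t 0, pow_zero, mul_sum]
        exact sum_congr rfl fun j _ => by ring

variable (P z) in
/-- `∑ₜ Pᵢ(τ_z > t)`, which is `Eᵢ[τ_z]` by the tail-sum formula when `z` is absorbing. -/
noncomputable def expectedHittingTime (i : S) : ℝ :=
  ∑' t, (1 - (P ^ t) i z)

theorem expectedHittingTime_self (hz : ∀ j, P z j = if j = z then 1 else 0) :
    expectedHittingTime P z z = 0 := by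
  simp [expectedHittingTime, pow_apply_self_of_absorbing hz]

theorem expectedHittingTime_eq_one_add (hP : P ∈ rowStochastic ℝ S)
    (hz : ∀ j, P z j = if j = z then 1 else 0) (hreach : ∀ i, ∃ t, 0 < (P ^ t) i z) {i : S}
    (hi : i ≠ z) : expectedHittingTime P z i = 1 + ∑ j, P i j * expectedHittingTime P z j := by
  have hs := summable_one_sub_pow_apply hP hz hreach
  rw [expectedHittingTime, (hs i).tsum_eq_zero_add, pow_zero, one_apply_ne hi, sub_zero]
  congr 1
  calc ∑' t, (1 - (P ^ (t + 1)) i z) = ∑' t, ∑ j, P i j * (1 - (P ^ t) j z) :=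
        tsum_congr fun t => by rw [add_comm, one_sub_pow_add_apply hP, pow_one]
    _ = ∑ j, ∑' t, P i j * (1 - (P ^ t) j z) :=
        Summable.tsum_finsetSum fun j _ => (hs j).mul_left _
    _ = ∑ j, P i j * expectedHittingTime P z j := sum_congr rfl fun j _ => tsum_mul_left

theorem one_le_expectedHittingTime (hP : P ∈ rowStochastic ℝ S)
    (hz : ∀ j, P z j = if j = z then 1 else 0) (hreach : ∀ i, ∃ t, 0 < (P ^ t) i z) {i : S}
    (hi : i ≠ z) : 1 ≤ expectedHittingTime P z i :=
  calc (1 : ℝ) = 1 - (P ^ 0) i z := by simp [one_apply_ne hi]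
    _ ≤ _ := (summable_one_sub_pow_apply hP hz hreach i).le_tsum 0 fun t _ =>
      sub_nonneg.2 (le_one_of_mem_rowStochastic (pow_mem hP t))

end Absorption

section Bead

variable {b : ℕ} {B : Matrix (Fin (b + 1)) (Fin (b + 1)) ℝ}

theorem IsBead.mem_rowStochastic (hB : IsBead b B) : B ∈ rowStochastic ℝ (Fin (b + 1)) :=
  mem_rowStochastic_iff_sum.2 hB.1

theorem IsBead.summable_one_sub_pow_apply (hB : IsBead b B) (i : Fin (b + 1)) :
    Summable fun t => 1 - (B ^ t) i (Fin.last b) :=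
  _root_.summable_one_sub_pow_apply hB.mem_rowStochastic hB.2.1 (fun j => (hB.2.2.2.1 j).2) i

theorem sum_range_one_sub_pow_apply_eq_sum_mul_fpt (T : ℕ) :
    ∑ t ∈ range T, (1 - (B ^ t) 0 (Fin.last b)) =
      ∑ t ∈ range (T + 1), (t : ℝ) * fpt b B t + T * (1 - (B ^ T) 0 (Fin.last b)) := by
  induction T with
  | zero => simp [fpt]
  | succ T ih =>
    rw [sum_range_succ, ih, sum_range_succ _ (T + 1), fpt]
    push_cast
    ring

theorem IsBead.expectedHittingTime_zero (hB : IsBead b B) {μ : ℝ}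
    (hμ : HasSum (fun t : ℕ => (t : ℝ) * fpt b B t) μ) :
    expectedHittingTime B (Fin.last b) 0 = μ := by
  have hs := hB.summable_one_sub_pow_apply 0
  have htail := hs.tendsto_natCast_mul_of_antitone
    (antitone_one_sub_pow_apply hB.mem_rowStochastic hB.2.1 0)
  have hlim := (hμ.tendsto_sum_nat.comp (tendsto_add_atTop_nat 1)).add htail
  rw [add_zero] at hlim
  exact tendsto_nhds_unique hs.hasSum.tendsto_sum_nat
    (hlim.congr fun T => (sum_range_one_sub_pow_apply_eq_sum_mul_fpt T).symm)

theorem IsBead.beadClosure_mulVec_expectedHittingTime (hB : IsBead b B) :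
    beadClosure b B *ᵥ expectedHittingTime B (Fin.last b) =
      expectedHittingTime B (Fin.last b) - 1 +
        Pi.single (Fin.last b) (expectedHittingTime B (Fin.last b) 0 + 1) := by
  funext j
  by_cases hj : j = Fin.last b
  · subst hj
    simp [mulVec, dotProduct, beadClosure, expectedHittingTime_self hB.2.1]
  · have h := expectedHittingTime_eq_one_add hB.mem_rowStochastic hB.2.1
      (fun j => (hB.2.2.2.1 j).2) hj
    simp [mulVec, dotProduct, beadClosure, hj, h]

/-- Kac's formula `π(b) = 1 / (μ + 1)`: the mean return time to `b` in `B̄` is `μ + 1`. -/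
theorem IsBead.stationary_last_mul (hB : IsBead b B) {π : Fin (b + 1) → ℝ}
    (hπ : IsStationaryVec (beadClosure b B) π) :
    π (Fin.last b) * (expectedHittingTime B (Fin.last b) 0 + 1) = 1 := by
  have hvec : π ᵥ* beadClosure b B = π := funext hπ.2.2
  have h := dotProduct_mulVec π (beadClosure b B) (expectedHittingTime B (Fin.last b))
  rw [hB.beadClosure_mulVec_expectedHittingTime, hvec, dotProduct_add, dotProduct_sub,
    dotProduct_single, dotProduct_one, hπ.2.1] at h
  linarith

theorem IsStationaryVec.sum_castSucc_mul_apply {π : Fin (b + 1) → ℝ}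
    (hπ : IsStationaryVec (beadClosure b B) π) (j : Fin (b + 1)) :
    ∑ k : Fin b, π k.castSucc * B k.castSucc j =
      π j - if j = 0 then π (Fin.last b) else 0 := by
  rw [← hπ.2.2 j, Fin.sum_univ_castSucc]
  simp [beadClosure, (Fin.castSucc_lt_last _).ne]

end Bead

theorem reflTransGen_of_pow_apply_pos {S : Type*} [Fintype S] [DecidableEq S]
    {P : Matrix S S ℝ} (hP : ∀ i j, 0 ≤ P i j) {t : ℕ} {x y : S} (h : 0 < (P ^ t) x y) :
    Relation.ReflTransGen (fun a c => 0 < P a c) x y := by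
  induction t generalizing y with
  | zero =>
    by_cases hxy : x = y
    · exact hxy ▸ .refl
    · simp [one_apply_ne hxy] at h
  | succ t ih =>
    rw [pow_succ, mul_apply] at h
    obtain ⟨k, -, hk⟩ := exists_lt_of_sum_lt (f := fun _ => 0)
      (g := fun k => (P ^ t) x k * P k y) (s := univ) (by simpa using h)
    rcases mul_pos_iff.1 hk with ⟨h₁, h₂⟩ | ⟨-, h₂⟩
    · exact (ih h₁).tail h₂
    · exact absurd h₂ (hP k y).not_gt

section Stationary

variable {S : Type*} [Fintype S] {P : Matrix S S ℝ}

theorem isStationaryVec_div_sum {w : S → ℝ} (hw : ∀ s, 0 ≤ w s) (hpos : 0 < ∑ s, w s)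
    (hinv : ∀ s', ∑ s, w s * P s s' = w s') :
    IsStationaryVec P fun s => w s / ∑ s, w s :=
  ⟨fun s => div_nonneg (hw s) hpos.le, by rw [← sum_div, div_self hpos.ne'],
    fun s' => by simp_rw [div_mul_eq_mul_div, ← sum_div, hinv]⟩

theorem IsStationaryVec.pos_of_reflTransGen (hP : ∀ i j, 0 ≤ P i j) {ν : S → ℝ}
    (hν : IsStationaryVec P ν) {x y : S} (hx : 0 < ν x)
    (h : Relation.ReflTransGen (fun a c => 0 < P a c) x y) : 0 < ν y := by
  induction h with
  | refl => exact hx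
  | tail _ hyz ih =>
    rw [← hν.2.2]
    exact (mul_pos ih hyz).trans_le
      (single_le_sum (fun s _ => mul_nonneg (hν.1 s) (hP s _)) (mem_univ _))

theorem IsStationaryVec.eq_zero_of_forall_eq_zero {ρ : S → ℝ} (hρ : IsStationaryVec P ρ)
    {x : S} (hx : ∀ s, P s x = 0) : ρ x = 0 := by
  simp [← hρ.2.2 x, hx]

/-- Uniqueness by the maximum principle: the states where `ρ / ν` is maximal are closed under
predecessors, hence contain all of `R`. -/
theorem IsStationaryVec.eq_of_reflTransGen (hP : ∀ i j, 0 ≤ P i j) {ν ρ : S → ℝ}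
    (hν : IsStationaryVec P ν) (hρ : IsStationaryVec P ρ) (R : Finset S)
    (hR : ∀ x ∉ R, ∀ s, P s x = 0)
    (hreach : ∀ x ∈ R, ∀ y ∈ R, Relation.ReflTransGen (fun a c => 0 < P a c) x y) :
    ρ = ν := by
  obtain ⟨x₀, hx₀⟩ : ∃ x, 0 < ν x := by
    by_contra! h
    linarith [hν.2.1, sum_nonpos fun x (_ : x ∈ univ) => h x]
  have hx₀R : x₀ ∈ R := by
    by_contra hx
    exact hx₀.ne' (hν.eq_zero_of_forall_eq_zero (hR x₀ hx))
  have hνpos (y) (hy : y ∈ R) : 0 < ν y :=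
    hν.pos_of_reflTransGen hP hx₀ (hreach x₀ hx₀R y hy)
  obtain ⟨y, hyR, hymax⟩ := exists_max_image R (fun x => ρ x / ν x) ⟨x₀, hx₀R⟩
  set M := ρ y / ν y
  have hle (x : S) : ρ x ≤ M * ν x := by
    by_cases hx : x ∈ R
    · exact (div_le_iff₀ (hνpos x hx)).1 (hymax x hx)
    · simp [hρ.eq_zero_of_forall_eq_zero (hR x hx), hν.eq_zero_of_forall_eq_zero (hR x hx)]
  have hpred {x z : S} (hxz : 0 < P x z) (hz : ρ z = M * ν z) : ρ x = M * ν x := by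
    have hsum : ∑ s, ρ s * P s z = ∑ s, M * ν s * P s z := by
      simp_rw [mul_assoc, ← mul_sum, hρ.2.2, hν.2.2, hz]
    exact mul_right_cancel₀ hxz.ne' ((sum_eq_sum_iff_of_le fun s _ =>
      mul_le_mul_of_nonneg_right (hle s) (hP s z)).1 hsum x (mem_univ x))
  have hall (x : S) : ρ x = M * ν x := by
    by_cases hx : x ∈ R
    · exact (hreach x hx y hyR).head_induction_on (motive := fun a _ => ρ a = M * ν a)
        (div_mul_cancel₀ _ (hνpos y hyR).ne').symm fun hac _ ih => hpred hac ih
    · simp [hρ.eq_zero_of_forall_eq_zero (hR x hx), hν.eq_zero_of_forall_eq_zero (hR x hx)]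
  have hM : M = 1 := by
    simpa [hall, ← mul_sum, hν.2.1] using hρ.2.1
  funext x
  rw [hall, hM, one_mul]

end Stationary

section NecklaceWeight

variable {n b : ℕ} [NeZero b] {B : Matrix (Fin (b + 1)) (Fin (b + 1)) ℝ} {r : ℕ → Bool}

variable (n r) in
def necklaceWeight (μ : ℝ) (π : Fin (b + 1) → ℝ) (s : Fin n × Fin b) : ℝ :=
  if r s.1 then (μ + 1) * π s.2.castSucc else if s.2 = 0 then 1 else 0

theorem necklaceWeight_nonneg {μ : ℝ} (hμ : 0 ≤ μ + 1) {π : Fin (b + 1) → ℝ}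
    (hπ : ∀ k, 0 ≤ π k) (s : Fin n × Fin b) : 0 ≤ necklaceWeight n r μ π s := by
  unfold necklaceWeight
  split_ifs <;> first | positivity | exact mul_nonneg hμ (hπ _)

theorem sum_necklaceWeight_mul_exit {μ : ℝ} {π : Fin (b + 1) → ℝ}
    (hπ : IsStationaryVec (beadClosure b B) π) (hkac : π (Fin.last b) * (μ + 1) = 1)
    (i : Fin n) :
    ∑ k, necklaceWeight n r μ π (i, k) * (if r i then B k.castSucc (Fin.last b) else 1) =
      1 := by
  by_cases hr : r i
  · simp only [necklaceWeight, hr, if_true, mul_assoc, ← mul_sum,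
      hπ.sum_castSucc_mul_apply, Fin.last_pos'.ne', if_false, sub_zero]
    linarith
  · simp [necklaceWeight, hr]

theorem sum_necklaceWeight {μ : ℝ} {π : Fin (b + 1) → ℝ}
    (hπ : IsStationaryVec (beadClosure b B) π)
    (hkac : π (Fin.last b) * (μ + 1) = 1) :
    ∑ s, necklaceWeight n r μ π s = n + (μ - 1) * Rcount r n := by
  have hbead : ∑ k : Fin b, π k.castSucc = 1 - π (Fin.last b) := by
    rw [← hπ.2.1, Fin.sum_univ_castSucc]; ring
  have hrow (i : Fin n) : ∑ k, necklaceWeight n r μ π (i, k) =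
      1 + (μ - 1) * if r i then 1 else 0 := by
    by_cases hr : r i
    · simp only [necklaceWeight, hr, if_true, ← mul_sum, hbead]
      linarith
    · simp [necklaceWeight, hr]
  rw [Fintype.sum_prod_type, sum_congr rfl fun i _ => hrow i, sum_add_distrib, ← mul_sum,
    Fin.sum_univ_eq_sum_range (fun i => if r i then (1 : ℝ) else 0), sum_boole, Rcount]
  simp

end NecklaceWeight

section Necklace

variable {n b : ℕ} [NeZero n] [NeZero b] {B : Matrix (Fin (b + 1)) (Fin (b + 1)) ℝ}
  {r : ℕ → Bool}

theorem necklace_apply (i i' : Fin n) (k k' : Fin b) :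
    necklace n b B r (i, k) (i', k') =
      (if i' = i ∧ r i then B k.castSucc k'.castSucc else 0) +
        (if i' = i + 1 ∧ k' = 0 then (if r i then B k.castSucc (Fin.last b) else 1) else 0) := by
  have hsucc : (i'.val = (i.val + 1) % n ∧ k'.val = 0) ↔ (i' = i + 1 ∧ k' = 0) := by
    rw [Fin.val_eq_zero_iff, Fin.ext_iff (b := i + 1), Fin.val_add, Fin.val_one', Nat.add_mod_mod]
  simp only [necklace, of_apply, hsucc]
  by_cases hr : r i <;> simp [hr]

theorem sum_mul_necklace_apply (f : Fin n × Fin b → ℝ) (i' : Fin n) (k' : Fin b) :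
    ∑ s, f s * necklace n b B r s (i', k') =
      (if r i' then ∑ k, f (i', k) * B k.castSucc k'.castSucc else 0) +
        (if k' = 0 then
          ∑ k, f (i' - 1, k) * (if r ↑(i' - 1) then B k.castSucc (Fin.last b) else 1)
        else 0) := by
  simp only [Fintype.sum_prod_type, necklace_apply, mul_add, sum_add_distrib]
  congr 1
  · by_cases hr : r i' <;> simp [hr, ite_and]
  · have hpred (i : Fin n) : i' = i + 1 ↔ i = i' - 1 := by rw [eq_sub_iff_add_eq, eq_comm]
    by_cases hk : k' = 0 <;> simp [hk, hpred]

theorem necklace_nonneg (hB : IsBead b B) (s s' : Fin n × Fin b) :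
    0 ≤ necklace n b B r s s' := by
  rw [← Prod.mk.eta (p := s), ← Prod.mk.eta (p := s'), necklace_apply]
  exact add_nonneg (by split_ifs <;> simp [hB.1.1]) (by split_ifs <;> simp [hB.1.1])

theorem necklace_apply_eq_zero {i' : Fin n} {k' : Fin b} (hi' : r i' = false) (hk' : k' ≠ 0)
    (s : Fin n × Fin b) : necklace n b B r s (i', k') = 0 := by
  rw [← Prod.mk.eta (p := s), necklace_apply]
  split_ifs with h₁ h₂ <;> simp_all

theorem sum_necklaceWeight_mul_necklace {μ : ℝ} {π : Fin (b + 1) → ℝ}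
    (hπ : IsStationaryVec (beadClosure b B) π) (hkac : π (Fin.last b) * (μ + 1) = 1)
    (s' : Fin n × Fin b) :
    ∑ s, necklaceWeight n r μ π s * necklace n b B r s s' = necklaceWeight n r μ π s' := by
  obtain ⟨i', k'⟩ := s'
  rw [sum_mul_necklace_apply, sum_necklaceWeight_mul_exit hπ hkac]
  by_cases hr : r i'
  · simp only [necklaceWeight, hr, if_true, mul_assoc, ← mul_sum,
      hπ.sum_castSucc_mul_apply, Fin.castSucc_eq_zero_iff]
    split_ifs <;> linarith
  · simp [necklaceWeight, hr]

variable (b) in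
/-- `beadState i k = s_{i,k}`, with the exit `s_{i,b}` of the bead identified with `s_{i+1}`. -/
def beadState (i : Fin n) : Fin (b + 1) → Fin n × Fin b :=
  Fin.lastCases (i + 1, 0) fun k => (i, k)

local notation "Reach" => Relation.ReflTransGen (fun x y => 0 < necklace n b B r x y)

theorem reflTransGen_beadState (hB : IsBead b B) {i : Fin n} (hr : r i) {a c : Fin (b + 1)}
    (h : Relation.ReflTransGen (fun a c => 0 < B a c) a c) :
    Reach (beadState b i a) (beadState b i c) := by
  refine Relation.ReflTransGen.lift' (beadState b i) (fun a c hac => ?_) _ _ h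
  induction a using Fin.lastCases with
  | last =>
    obtain rfl : c = Fin.last b := by by_contra hc; simp [hB.2.1, hc] at hac
    rfl
  | cast k =>
    refine .single ?_
    induction c using Fin.lastCases with
    | last =>
      simp only [beadState, Fin.lastCases_last, Fin.lastCases_castSucc, necklace_apply, hr,
        and_true, if_true]
      exact add_pos_of_nonneg_of_pos (by split_ifs <;> simp [hB.1.1]) hac
    | cast k' =>
      simp only [beadState, Fin.lastCases_castSucc, necklace_apply, hr, and_true, if_true]
      exact add_pos_of_pos_of_nonneg hac (by split_ifs <;> simp [hB.1.1])

theorem reach_next_link (hB : IsBead b B) (i : Fin n) (k : Fin b) : Reach (i, k) (i + 1, 0) := by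
  by_cases hr : r i
  · obtain ⟨t, ht⟩ := (hB.2.2.2.1 k.castSucc).2
    simpa [beadState] using reflTransGen_beadState hB hr (reflTransGen_of_pow_apply_pos hB.1.1 ht)
  · exact .single (by simp [necklace_apply, hr])

open Fin.NatCast in
theorem reach_link (hB : IsBead b B) (i j : Fin n) : Reach (i, 0) (j, 0) := by
  have h (d : ℕ) : Reach (i, 0) (i + d, 0) := by
    induction d with
    | zero => simpa using .refl
    | succ d ih =>
      rw [Nat.cast_succ, ← add_assoc]
      exact ih.trans (reach_next_link hB _ 0)
  simpa [Fin.cast_val_eq_self] using h (j - i).val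

theorem reach_of_mem_bead_or_link (hB : IsBead b B) (x : Fin n × Fin b) {y : Fin n × Fin b}
    (hy : r y.1 ∨ y.2 = 0) : Reach x y := by
  obtain ⟨j, l⟩ := y
  refine (reach_next_link hB x.1 x.2).trans ((reach_link hB _ j).trans ?_)
  rcases hy with hr | rfl
  · obtain ⟨t, ht⟩ := (hB.2.2.2.1 l.castSucc).1
    rw [← Fin.castSucc_zero'] at ht
    simpa only [beadState, Fin.lastCases_castSucc] using
      reflTransGen_beadState hB hr (reflTransGen_of_pow_apply_pos hB.1.1 ht)
  · exact .refl

end Necklace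

theorem stmt4_general (n b : ℕ) (hn : 0 < n) (hb : 0 < b)
    (B : Matrix (Fin (b + 1)) (Fin (b + 1)) ℝ) (hB : IsBead b B)
    (r : ℕ → Bool) (m : ℕ) (hm : m = Rcount r n)
    (π : Fin (b + 1) → ℝ) (hπ : IsStationaryVec (beadClosure b B) π)
    (μ : ℝ) (hμ : HasSum (fun t : ℕ => (t : ℝ) * fpt b B t) μ)
    (πnm : Fin n × Fin b → ℝ)
    (hπnm : πnm = fun s =>
      if r s.1.val then (μ + 1) * π s.2.castSucc / ((n : ℝ) + (μ - 1) * m)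
      else if s.2.val = 0 then 1 / ((n : ℝ) + (μ - 1) * m) else 0) :
    IsStationaryVec (necklace n b B r) πnm ∧
      ∀ ρ : Fin n × Fin b → ℝ, IsStationaryVec (necklace n b B r) ρ → ρ = πnm := by
  have : NeZero n := ⟨hn.ne'⟩
  have : NeZero b := ⟨hb.ne'⟩
  have hμ₁ : 1 ≤ μ := hB.expectedHittingTime_zero hμ ▸ one_le_expectedHittingTime
    hB.mem_rowStochastic hB.2.1 (fun j => (hB.2.2.2.1 j).2) Fin.last_pos'.ne
  have hkac : π (Fin.last b) * (μ + 1) = 1 :=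
    hB.expectedHittingTime_zero hμ ▸ hB.stationary_last_mul hπ
  have hsum := sum_necklaceWeight (n := n) (r := r) hπ hkac
  have hπnm_eq :
      πnm = fun s => necklaceWeight n r μ π s / ∑ s, necklaceWeight n r μ π s := by
    subst hm hπnm
    funext s
    rw [hsum]
    simp only [necklaceWeight, Fin.val_eq_zero_iff]
    split_ifs <;> ring
  have hmass : 0 < ∑ s, necklaceWeight n r μ π s := by
    have : (0 : ℝ) ≤ (μ - 1) * Rcount r n := mul_nonneg (by linarith) (Nat.cast_nonneg _)
    have : (0 : ℝ) < n := Nat.cast_pos.2 hn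
    linarith
  have hstat : IsStationaryVec (necklace n b B r) πnm := hπnm_eq ▸ isStationaryVec_div_sum
    (necklaceWeight_nonneg (by linarith) hπ.1) hmass (sum_necklaceWeight_mul_necklace hπ hkac)
  refine ⟨hstat, fun ρ hρ => hstat.eq_of_reflTransGen (necklace_nonneg hB) hρ
    (univ.filter fun s => r s.1 ∨ s.2 = 0) (fun x hx s => ?_)
    (fun x _ y hy => reach_of_mem_bead_or_link hB x (by simpa using hy))⟩
  simp only [mem_filter, mem_univ, true_and, not_or, Bool.not_eq_true] at hx
  exact necklace_apply_eq_zero hx.1 hx.2 s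

/-- The stationary distribution of the necklace chain `P_{n,m}` is
`(μ+1)π(k)/(n+(μ−1)m)` on a state `s_{i,k}` of a bead and `1/(n+(μ−1)m)` on a link
state not in a bead, where `π` is the stationary distribution of `B̄` and `μ` is the
mean first passage time from `0` to `b` in `B`.  (Unused junk states `(i,k)`, `k ≥ 1`,
`r i = 0`, carry mass `0`.)  Moreover this is the unique stationary distribution. -/
theorem stmt4 (n b : ℕ) (hn : 0 < n) (hb : 0 < b)
    (B : Matrix (Fin (b + 1)) (Fin (b + 1)) ℝ) (hB : IsBead b B)
    (r : ℕ → Bool) (m : ℕ) (hm : m = Rcount r n) (hm1 : 1 ≤ m)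
    (π : Fin (b + 1) → ℝ) (hπ : IsStationaryVec (beadClosure b B) π)
    (μ : ℝ) (hμ : HasSum (fun t : ℕ => (t : ℝ) * fpt b B t) μ)
    (πnm : Fin n × Fin b → ℝ)
    (hπnm : πnm = fun s =>
      if r s.1.val then (μ + 1) * π s.2.castSucc / ((n : ℝ) + (μ - 1) * m)
      else if s.2.val = 0 then 1 / ((n : ℝ) + (μ - 1) * m) else 0) :
    IsStationaryVec (necklace n b B r) πnm ∧
      ∀ ρ : Fin n × Fin b → ℝ, IsStationaryVec (necklace n b B r) ρ → ρ = πnm :=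
  stmt4_general n b hn hb B hB r m hm π hπ μ hμ πnm hπnm
end

section
/- Let P_{n,m} be a necklace chain with n link states and m beads of type B. Let X_1, X_2, … be i.i.d. random variables distributed as the first passage time from 0 to b in the bead B, and set S_j = X_1 + ⋯ + X_j. If s_i is a link state not in a bead (i.e., r_i = 0), then for every t ≥ 0, P_{n,m}^t(s_0, s_i) = Σ_{j ≥ 0} P[S_{mj+R_i} = t − i + R_i − (n−m)j]. -/
open Matrix

/-- `π` is a stationary distribution of the chain `P`. -/
def IsStationaryDist {S : Type*} [Fintype S] (P : Matrix S S ℝ) (π : S → ℝ) : Prop :=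
  (∀ s, 0 ≤ π s) ∧ (∑ s, π s = 1) ∧ ∀ s', ∑ s, π s * P s s' = π s'

/-- `convPow f j a = P[S_j = a]` where `S_j = X_1 + ⋯ + X_j` is a sum of `j` i.i.d.
random variables with common distribution `f` on `ℕ`; by convention
`P[S_0 = a] = 1` iff `a = 0`. -/
def convPow (f : ℕ → ℝ) : ℕ → ℕ → ℝ
  | 0, a => if a = 0 then 1 else 0
  | j + 1, a => ∑ k ∈ Finset.range (a + 1), convPow f j k * f (a - k)

/-- `P[S_j = a]` for an integer argument `a` (zero for negative `a`). -/
def probZ (f : ℕ → ℝ) (j : ℕ) (a : ℤ) : ℝ :=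
  if 0 ≤ a then convPow f j a.toNat else 0

/-!
Unroll the necklace onto the positions `q = 0, 1, 2, …` of `ℕ`, position `q` carrying the bead
`β (q % n)`, where a link is the bead `linkBead b` that exits in exactly one step. The walk leaves
position `q` after an independent first passage time of its bead, so the generating function of
the arrival time at position `q` is the product of the first passage generating functions of the
beads before it. Conditioning on the last step, the walk is at `(i, k)` at time `t` exactly when
it arrived at some position `q ≡ i (mod n)` at time `t - u` and then spent `u` steps inside the
bead. For a link state `s_i` only `u = 0` contributes, and at `q = i + n j` the arrival generating
function is `X ^ ((n - m) j + i - R_i) * φ ^ (m j + R_i)`, with `φ` the first passage generating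
function of `B`; its `t`-th coefficient is the `j`-th term of the claimed series.
-/

open Finset PowerSeries

section Bead

variable {b : ℕ}

def LastAbsorbing (M : Matrix (Fin (b + 1)) (Fin (b + 1)) ℝ) : Prop :=
  ∀ j, M (Fin.last b) j = if j = Fin.last b then 1 else 0

noncomputable def occupationSeries (M : Matrix (Fin (b + 1)) (Fin (b + 1)) ℝ) (k : Fin b) :
    PowerSeries ℝ :=
  PowerSeries.mk fun u => (M ^ u) 0 k.castSucc

variable {M : Matrix (Fin (b + 1)) (Fin (b + 1)) ℝ}

lemma one_apply_zero_castSucc (k : Fin b) :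
    (1 : Matrix (Fin (b + 1)) (Fin (b + 1)) ℝ) 0 k.castSucc = if k.val = 0 then 1 else 0 := by
  simp [Matrix.one_apply, Fin.ext_iff, eq_comm]

lemma pow_succ_apply_eq_sum_castSucc (M : Matrix (Fin (b + 1)) (Fin (b + 1)) ℝ) (u : ℕ)
    (j : Fin (b + 1)) :
    (M ^ (u + 1)) 0 j = ∑ k : Fin b, (M ^ u) 0 k.castSucc * M k.castSucc j +
      (M ^ u) 0 (Fin.last b) * M (Fin.last b) j := by
  rw [pow_succ, Matrix.mul_apply, Fin.sum_univ_castSucc]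

lemma coeff_mul_X_mul_sum_C_mul (A : PowerSeries ℝ) (t : ℕ) (c : Fin b → ℝ)
    (φ : Fin b → PowerSeries ℝ) :
    coeff (t + 1) (A * (X * ∑ k, C (c k) * φ k)) = ∑ k, coeff t (A * φ k) * c k := by
  rw [mul_left_comm, coeff_succ_X_mul, mul_sum, map_sum]
  refine sum_congr rfl fun k _ => ?_
  rw [mul_left_comm, coeff_C_mul, mul_comm]

lemma coeff_succ_mul_occupationSeries (hM : LastAbsorbing M) (A : PowerSeries ℝ) (t : ℕ)
    (k : Fin b) :
    coeff (t + 1) (A * occupationSeries M k) =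
      (if k.val = 0 then coeff (t + 1) A else 0) +
        ∑ k' : Fin b, coeff t (A * occupationSeries M k') * M k'.castSucc k.castSucc := by
  have hseries : occupationSeries M k = C (if k.val = 0 then 1 else 0) +
      X * ∑ k' : Fin b, C (M k'.castSucc k.castSucc) * occupationSeries M k' := by
    ext (_ | u)
    · simp [occupationSeries, one_apply_zero_castSucc]
    · rw [occupationSeries, coeff_mk, pow_succ_apply_eq_sum_castSucc, hM,
        if_neg (Fin.castSucc_lt_last k).ne, mul_zero, add_zero, map_add, coeff_succ_X_mul,
        coeff_C, if_neg u.succ_ne_zero, zero_add, map_sum]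
      simp [occupationSeries, mul_comm]
  rw [hseries, mul_add, map_add, coeff_mul_X_mul_sum_C_mul]
  split_ifs <;> simp

lemma coeff_succ_mul_mk_fpt (hM : LastAbsorbing M) (A : PowerSeries ℝ) (t : ℕ) :
    coeff (t + 1) (A * PowerSeries.mk (fpt b M)) =
      ∑ k' : Fin b, coeff t (A * occupationSeries M k') * M k'.castSucc (Fin.last b) := by
  have hseries : PowerSeries.mk (fpt b M) =
      X * ∑ k' : Fin b, C (M k'.castSucc (Fin.last b)) * occupationSeries M k' := by
    ext (_ | u)
    · simp [fpt]
    · rw [coeff_mk, fpt, pow_succ_apply_eq_sum_castSucc, hM, if_pos rfl, mul_one,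
        add_sub_cancel_right, coeff_succ_X_mul, map_sum]
      simp [occupationSeries, mul_comm]
  rw [hseries, coeff_mul_X_mul_sum_C_mul]

noncomputable def linkBead (b : ℕ) : Matrix (Fin (b + 1)) (Fin (b + 1)) ℝ :=
  Matrix.of fun _ j => if j = Fin.last b then 1 else 0

lemma linkBead_lastAbsorbing : LastAbsorbing (linkBead b) := fun _ => rfl

lemma linkBead_pow_succ (u : ℕ) : linkBead b ^ (u + 1) = linkBead b := by
  induction u with
  | zero => rw [zero_add, pow_one]
  | succ u ih =>
    rw [pow_succ, ih]
    ext i j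
    simp [linkBead, Matrix.mul_apply]

lemma mk_fpt_linkBead (hb : 0 < b) : PowerSeries.mk (fpt b (linkBead b)) = X := by
  ext (_ | _ | u)
  · simp [fpt]
  · simp [fpt, linkBead, Fin.ext_iff, hb.ne]
  · simp [fpt, linkBead_pow_succ, coeff_X]

lemma occupationSeries_linkBead (k : Fin b) :
    occupationSeries (linkBead b) k = C (if k.val = 0 then 1 else 0) := by
  ext (_ | u)
  · simp [occupationSeries, one_apply_zero_castSucc]
  · rw [occupationSeries, coeff_mk, linkBead_pow_succ, coeff_C, if_neg u.succ_ne_zero]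
    simp [linkBead, (Fin.castSucc_lt_last k).ne]

end Bead

section Necklace

variable {n b : ℕ} (β : ℕ → Matrix (Fin (b + 1)) (Fin (b + 1)) ℝ)

noncomputable def beadNecklace (n b : ℕ) (β : ℕ → Matrix (Fin (b + 1)) (Fin (b + 1)) ℝ) :
    Matrix (Fin n × Fin b) (Fin n × Fin b) ℝ :=
  Matrix.of fun s s' =>
    (if s'.1 = s.1 then β s.1 s.2.castSucc s'.2.castSucc else 0) +
    (if s'.1.val = (s.1.val + 1) % n ∧ s'.2.val = 0 then β s.1 s.2.castSucc (Fin.last b) else 0)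

/-- The generating function of the time at which the unrolled walk reaches position `p`. -/
noncomputable def arrivalSeries (n : ℕ) (β : ℕ → Matrix (Fin (b + 1)) (Fin (b + 1)) ℝ)
    (p : ℕ) : PowerSeries ℝ :=
  ∏ q ∈ range p, PowerSeries.mk (fpt b (β (q % n)))

lemma arrivalSeries_succ (p : ℕ) :
    arrivalSeries n β (p + 1) = arrivalSeries n β p * PowerSeries.mk (fpt b (β (p % n))) :=
  prod_range_succ _ _

lemma arrivalSeries_mul_add (j i : ℕ) :
    arrivalSeries n β (n * j + i) = arrivalSeries n β n ^ j * arrivalSeries n β i := by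
  have hshift : ∀ a c, arrivalSeries n β (n * a + c) =
      arrivalSeries n β (n * a) * arrivalSeries n β c := by
    simp [arrivalSeries, prod_range_add]
  have hpow : ∀ a, arrivalSeries n β (n * a) = arrivalSeries n β n ^ a := by
    intro a
    induction a with
    | zero => simp [arrivalSeries]
    | succ a ih => rw [Nat.mul_succ, hshift, ih, pow_succ]
  rw [hshift, hpow]

lemma coeff_arrivalSeries_mul_of_lt (A : PowerSeries ℝ) {t p : ℕ} (h : t < p) :
    coeff t (arrivalSeries n β p * A) = 0 := by
  have hdvd : X ^ p ∣ arrivalSeries n β p := by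
    rw [arrivalSeries, show (X : PowerSeries ℝ) ^ p = ∏ _q ∈ range p, X by simp]
    refine prod_dvd_prod_of_dvd (fun _ => (X : PowerSeries ℝ)) _ fun q _ => ?_
    exact X_dvd_iff.mpr constantCoeff_mk
  exact X_pow_dvd_iff.mp (dvd_mul_of_dvd_left hdvd A) t h

lemma sum_mul_beadNecklace_apply (v : Fin n × Fin b → ℝ) (i : Fin n) (k : Fin b) :
    ∑ s, v s * beadNecklace n b β s (i, k) =
      ∑ k', v (i, k') * β i k'.castSucc k.castSucc +
        if k.val = 0 then
          ∑ p : Fin n, if (p.val + 1) % n = i.val then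
            ∑ k', v (p, k') * β p k'.castSucc (Fin.last b) else 0
        else 0 := by
  simp only [beadNecklace, of_apply, mul_add, sum_add_distrib, Fintype.sum_prod_type]
  congr 1
  · simp [mul_ite]
  · split_ifs with hk
    · refine sum_congr rfl fun p _ => ?_
      simp only [hk, and_true, mul_ite, mul_zero, eq_comm (a := i.val)]
      split_ifs <;> simp
    · simp [hk]

/-- The walk enters the link state of position `i` when it leaves the bead of the position
before it. -/
lemma sum_coeff_arrivalSeries_succ (hn : 0 < n) (hβ : ∀ p, LastAbsorbing (β p)) (t i : ℕ) :
    ∑ q ∈ range (t + 2), (if q % n = i then coeff (t + 1) (arrivalSeries n β q) else 0) =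
      ∑ p : Fin n, if (p.val + 1) % n = i then ∑ k',
        (∑ q ∈ range (t + 1), if q % n = p.val then
          coeff t (arrivalSeries n β q * occupationSeries (β p) k') else 0) *
          β p k'.castSucc (Fin.last b) else 0 := by
  have hstart : coeff (t + 1) (arrivalSeries n β 0) = 0 := by simp [arrivalSeries]
  rw [sum_range_succ', hstart, ite_self, add_zero]
  symm
  calc _ = ∑ p ∈ range n, if (p + 1) % n = i then
          ∑ q ∈ range (t + 1), (if q % n = p then
            coeff (t + 1) (arrivalSeries n β q * PowerSeries.mk (fpt b (β p))) else 0) else 0 := by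
        rw [← Fin.sum_univ_eq_sum_range]
        refine sum_congr rfl fun p _ => ?_
        simp only [coeff_succ_mul_mk_fpt (hβ p), sum_mul, ite_mul, zero_mul,
          sum_comm (s := univ), sum_ite_irrel, sum_const_zero]
    _ = ∑ q ∈ range (t + 1), ∑ p ∈ range n, if q % n = p then
          (if (p + 1) % n = i then
            coeff (t + 1) (arrivalSeries n β q * PowerSeries.mk (fpt b (β p))) else 0)
          else 0 := by
        rw [sum_comm]
        refine sum_congr rfl fun p _ => ?_
        split_ifs <;> simp_all
    _ = _ := by
        refine sum_congr rfl fun q _ => ?_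
        rw [sum_ite_eq, if_pos (mem_range.mpr (Nat.mod_lt q hn)), Nat.mod_add_mod,
          arrivalSeries_succ]

theorem beadNecklace_pow_apply (hn : 0 < n) (hb : 0 < b) (hβ : ∀ p, LastAbsorbing (β p))
    (t : ℕ) (i : Fin n) (k : Fin b) :
    (beadNecklace n b β ^ t) (⟨0, hn⟩, ⟨0, hb⟩) (i, k) =
      ∑ q ∈ range (t + 1), if q % n = i.val then
        coeff t (arrivalSeries n β q * occupationSeries (β i) k) else 0 := by
  induction t generalizing i k with
  | zero =>
    simp [Matrix.one_apply, arrivalSeries, occupationSeries, Prod.ext_iff, Fin.ext_iff, eq_comm,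
      ite_and]
    congr
  | succ t ih =>
    have hstay : ∑ k', (∑ q ∈ range (t + 1), if q % n = i.val then
          coeff t (arrivalSeries n β q * occupationSeries (β i) k') else 0) *
          β i k'.castSucc k.castSucc =
        ∑ q ∈ range (t + 2), if q % n = i.val then ∑ k',
          coeff t (arrivalSeries n β q * occupationSeries (β i) k') *
            β i k'.castSucc k.castSucc else 0 := by
      simp only [sum_range_succ _ (t + 1), coeff_arrivalSeries_mul_of_lt β _ t.lt_succ_self,
        zero_mul, sum_const_zero, ite_self, add_zero, sum_mul]
      rw [sum_comm]
      refine sum_congr rfl fun q _ => ?_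
      split_ifs <;> simp
    rw [pow_succ, mul_apply, sum_mul_beadNecklace_apply]
    simp only [ih, hstay, ← sum_coeff_arrivalSeries_succ β hn hβ,
      coeff_succ_mul_occupationSeries (hβ i)]
    rw [add_comm]
    by_cases hk : k.val = 0 <;> simp only [hk, ↓reduceIte, zero_add, ← sum_add_distrib]
    all_goals exact sum_congr rfl fun q _ => by split_ifs <;> ring

end Necklace

lemma necklace_eq_beadNecklace (n b : ℕ) (B : Matrix (Fin (b + 1)) (Fin (b + 1)) ℝ)
    (r : ℕ → Bool) :
    necklace n b B r = beadNecklace n b fun p => if r p then B else linkBead b := by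
  ext s s'
  by_cases hr : r s.1.val <;>
    simp [necklace, beadNecklace, linkBead, hr, (Fin.castSucc_lt_last s'.2).ne]

lemma sum_range_ite_mod_eq_tsum (g : ℕ → ℝ) {N n i : ℕ} (hi : i < n)
    (hg : ∀ q, N ≤ q → g q = 0) :
    ∑ q ∈ range N, (if q % n = i then g q else 0) = ∑' j, g (i + n * j) := by
  have hinj : Function.Injective fun j => i + n * j := fun a c h => by
    simpa [(show n ≠ 0 by omega)] using h
  calc _ = ∑' q, if q % n = i then g q else 0 := by
        refine (tsum_eq_sum fun q hq => ?_).symm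
        simp [hg q (by simpa using hq)]
    _ = _ := by
        rw [← hinj.tsum_eq]
        · simp [Nat.mod_eq_of_lt hi]
        · intro q hq
          simp only [Function.mem_support, ne_eq, ite_eq_right_iff, Classical.not_imp] at hq
          exact ⟨q / n, by simp only [← hq.1, Nat.mod_add_div]⟩

lemma coeff_mk_pow (f : ℕ → ℝ) (j a : ℕ) : coeff a (PowerSeries.mk f ^ j) = convPow f j a := by
  induction j generalizing a with
  | zero => simp [convPow, coeff_one]
  | succ j ih =>
    rw [pow_succ, coeff_mul, Finset.Nat.sum_antidiagonal_eq_sum_range_succ_mk, convPow]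
    simp [ih]

lemma coeff_X_pow_mul_mk_pow (f : ℕ → ℝ) (d j t : ℕ) :
    coeff t (X ^ d * PowerSeries.mk f ^ j) = probZ f j ((t : ℤ) - d) := by
  rw [coeff_X_pow_mul', coeff_mk_pow, probZ]
  by_cases h : d ≤ t
  · rw [if_pos h, if_pos (by omega)]
    congr
    omega
  · rw [if_neg h, if_neg (by omega)]

lemma Rcount_le (r : ℕ → Bool) (i : ℕ) : Rcount r i ≤ i :=
  (card_filter_le _ _).trans (card_range i).le

lemma prod_range_ite_eq_pow_mul_pow {M : Type*} [CommMonoid M] (r : ℕ → Bool) (x y : M)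
    (p : ℕ) :
    ∏ q ∈ range p, (if r q then x else y) = x ^ Rcount r p * y ^ (p - Rcount r p) := by
  rw [prod_ite, prod_const, prod_const, Rcount]
  congr
  have := card_filter_add_card_filter_not (s := range p) (fun q => r q = true)
  rw [card_range] at this
  omega

lemma arrivalSeries_necklace {b : ℕ} (hb : 0 < b) {n : ℕ}
    (B : Matrix (Fin (b + 1)) (Fin (b + 1)) ℝ) (r : ℕ → Bool) {p : ℕ} (hp : p ≤ n) :
    arrivalSeries n (fun q => if r q then B else linkBead b) p =
      X ^ (p - Rcount r p) * PowerSeries.mk (fpt b B) ^ Rcount r p := by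
  rw [arrivalSeries, mul_comm, ← prod_range_ite_eq_pow_mul_pow]
  refine prod_congr rfl fun q hq => ?_
  rw [Nat.mod_eq_of_lt (lt_of_lt_of_le (mem_range.mp hq) hp)]
  split_ifs <;> simp [mk_fpt_linkBead hb]

theorem stmt5_general (n b : ℕ) (hn : 0 < n) (hb : 0 < b)
    (B : Matrix (Fin (b + 1)) (Fin (b + 1)) ℝ) (hB : IsBead b B)
    (r : ℕ → Bool) (m : ℕ) (hm : m = Rcount r n)
    (i : ℕ) (hi : i < n) (hri : r i = false) (t : ℕ) :
    (necklace n b B r ^ t) (⟨⟨0, hn⟩, ⟨0, hb⟩⟩) (⟨⟨i, hi⟩, ⟨0, hb⟩⟩) =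
      ∑' j : ℕ, probZ (fpt b B) (m * j + Rcount r i)
        ((t : ℤ) - (i : ℤ) + (Rcount r i : ℤ) - ((n : ℤ) - (m : ℤ)) * (j : ℤ)) := by
  set β : ℕ → Matrix (Fin (b + 1)) (Fin (b + 1)) ℝ := fun p => if r p then B else linkBead b
  have hβ : ∀ p, LastAbsorbing (β p) := fun p => by
    simp only [β]
    split
    exacts [hB.2.1, linkBead_lastAbsorbing]
  have hβi : β i = linkBead b := by simp [β, hri]
  rw [necklace_eq_beadNecklace, beadNecklace_pow_apply β hn hb hβ]
  simp only [hβi, occupationSeries_linkBead, ↓reduceIte, map_one, mul_one]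
  rw [sum_range_ite_mod_eq_tsum _ hi fun q hq => by
    simpa using coeff_arrivalSeries_mul_of_lt β 1 (Nat.lt_of_lt_of_le t.lt_succ_self hq)]
  refine tsum_congr fun j => ?_
  have hRi := Rcount_le r i
  have hmn : m ≤ n := hm ▸ Rcount_le r n
  have hexponent : (t : ℤ) - i + Rcount r i - (n - m) * j =
      t - ((n - m) * j + (i - Rcount r i) : ℕ) := by
    push_cast [hRi, hmn]
    ring
  rw [add_comm i, arrivalSeries_mul_add, arrivalSeries_necklace hb B r le_rfl,
    arrivalSeries_necklace hb B r hi.le, ← hm, hexponent, ← coeff_X_pow_mul_mk_pow]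
  congr 1
  ring

/-- Proposition 2.2, first case: if `s_i` is a link state not in a bead (`r_i = 0`), then
`P_{n,m}^t(s_0,s_i) = Σ_{j≥0} P[S_{mj+R_i} = t − i + R_i − (n−m)j]`, where the `X`'s are
i.i.d. first passage times from `0` to `b` in the bead `B`. -/
theorem stmt5 (n b : ℕ) (hn : 0 < n) (hb : 0 < b)
    (B : Matrix (Fin (b + 1)) (Fin (b + 1)) ℝ) (hB : IsBead b B)
    (r : ℕ → Bool) (m : ℕ) (hm : m = Rcount r n) (hm1 : 1 ≤ m)
    (i : ℕ) (hi : i < n) (hri : r i = false) (t : ℕ) :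
    (necklace n b B r ^ t) (⟨⟨0, hn⟩, ⟨0, hb⟩⟩) (⟨⟨i, hi⟩, ⟨0, hb⟩⟩) =
      ∑' j : ℕ, probZ (fpt b B) (m * j + Rcount r i)
        ((t : ℤ) - (i : ℤ) + (Rcount r i : ℤ) - ((n : ℤ) - (m : ℤ)) * (j : ℤ)) :=
  stmt5_general n b hn hb B hB r m hm i hi hri t
end

section
/- Fix k with 0 < k < 1 and for p ∈ (0,1) set q = 1 − p and f(p) = (q + pk)³/(pqk). Then f attains its minimum on (0,1) at the unique point p* = (−k + √(k² − k + 1))/(1 − k); that is, p* ∈ (0,1) and f(p) ≥ f(p*) for all p ∈ (0,1), with equality only at p = p*. -/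
/-- The convergence-time-scale coefficient `f(p) = (q + pk)³/(pqk)` with `q = 1 - p`. -/
noncomputable def necklaceRate (k p : ℝ) : ℝ := ((1 - p) + p * k) ^ 3 / (p * (1 - p) * k)

/-- The claimed optimizing hold probability `p* = (−k + √(k² − k + 1))/(1 − k)`. -/
noncomputable def optP (k : ℝ) : ℝ := (-k + Real.sqrt (k ^ 2 - k + 1)) / (1 - k)

/-!
The root `t = optP k ∈ (0, 1)` of `(1 - k) t² + 2 k t = 1` is the critical point of `f`, and at
such a root `f p - f t = (p - t)² (1 - p (1 - k)³ t²) / (k p (1 - p) t²)`. For `p, t, k ∈ (0, 1)`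
the middle factor is positive, so `f p - f t` is a positive multiple of `(p - t)²`.
-/

open Set

lemma sqrt_sq_sub_add_one_sq (k : ℝ) : Real.sqrt (k ^ 2 - k + 1) ^ 2 = k ^ 2 - k + 1 :=
  Real.sq_sqrt (by nlinarith [sq_nonneg (k - 1 / 2)])

lemma optP_quadratic {k : ℝ} (hk : k ≠ 1) : (1 - k) * optP k ^ 2 + 2 * k * optP k = 1 := by
  have hk' : 1 - k ≠ 0 := sub_ne_zero.mpr hk.symm
  have hs := sqrt_sq_sub_add_one_sq k
  rw [optP]
  generalize Real.sqrt (k ^ 2 - k + 1) = s at hs ⊢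
  field_simp
  linear_combination hs

lemma optP_mem_Ioo {k : ℝ} (hk0 : 0 < k) (hk1 : k < 1) : optP k ∈ Ioo 0 1 := by
  have hs := sqrt_sq_sub_add_one_sq k
  have hs0 := Real.sqrt_nonneg (k ^ 2 - k + 1)
  have hks : k < Real.sqrt (k ^ 2 - k + 1) := by nlinarith
  have hs1 : Real.sqrt (k ^ 2 - k + 1) < 1 := by nlinarith
  have h1k : 0 < 1 - k := by linarith
  exact ⟨div_pos (by linarith) h1k, (div_lt_one h1k).mpr (by linarith)⟩

lemma necklaceRate_sub_of_quadratic {k p t : ℝ} (hk : k ≠ 0) (hp0 : p ≠ 0) (hp1 : p ≠ 1)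
    (ht : (1 - k) * t ^ 2 + 2 * k * t = 1) :
    necklaceRate k p - necklaceRate k t
      = (p - t) ^ 2 * (1 - p * (1 - k) ^ 3 * t ^ 2) / (k * p * (1 - p) * t ^ 2) := by
  have ht0 : t ≠ 0 := by rintro rfl; norm_num at ht
  have ht1 : 1 - t ≠ 0 := by
    intro h
    obtain rfl : t = 1 := by linarith
    exact hk (by linarith)
  have hp1' : 1 - p ≠ 0 := sub_ne_zero.mpr (Ne.symm hp1)
  rw [necklaceRate, necklaceRate]
  field_simp
  linear_combination (-p*t + 2*p*t^2 - 2*p*t^2*k - p*t^3 + 2*p*t^3*k - p*t^3*k^2 + p^2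
    - 2*p^2*t + 2*p^2*t*k + p^2*t^2 - 2*p^2*t^2*k + p^2*t^2*k^2) * ht

lemma one_sub_mul_pow_mul_sq_pos {k p t : ℝ} (hk0 : 0 ≤ k) (hk1 : k ≤ 1) (hp : p ∈ Ioo 0 1)
    (ht : t ∈ Ioo 0 1) : 0 < 1 - p * (1 - k) ^ 3 * t ^ 2 := by
  have hle : (1 - k) ^ 3 * t ^ 2 ≤ 1 :=
    mul_le_one₀ (pow_le_one₀ (by linarith) (by linarith)) (by positivity)
      (pow_le_one₀ ht.1.le ht.2.le)
  have hmul : p * ((1 - k) ^ 3 * t ^ 2) ≤ p := mul_le_of_le_one_right hp.1.le hle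
  rw [mul_assoc]
  linarith [hp.2]

lemma exists_pos_necklaceRate_sub_optP_eq_mul_sq {k p : ℝ} (hk0 : 0 < k) (hk1 : k < 1)
    (hp : p ∈ Ioo 0 1) :
    ∃ c > 0, necklaceRate k p - necklaceRate k (optP k) = c * (p - optP k) ^ 2 := by
  have ht := optP_mem_Ioo hk0 hk1
  refine ⟨(1 - p * (1 - k) ^ 3 * optP k ^ 2) / (k * p * (1 - p) * optP k ^ 2), ?_, ?_⟩
  · have hq : 0 < 1 - p := sub_pos.mpr hp.2
    have := one_sub_mul_pow_mul_sq_pos hk0.le hk1.le hp ht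
    have := hp.1
    have := ht.1
    positivity
  · rw [necklaceRate_sub_of_quadratic hk0.ne' hp.1.ne' hp.2.ne (optP_quadratic hk1.ne)]
    ring

theorem stmt12 (k : ℝ) (hk0 : 0 < k) (hk1 : k < 1) :
    optP k ∈ Set.Ioo (0 : ℝ) 1 ∧
    (∀ p ∈ Set.Ioo (0 : ℝ) 1, necklaceRate k (optP k) ≤ necklaceRate k p) ∧
    (∀ p ∈ Set.Ioo (0 : ℝ) 1, necklaceRate k p = necklaceRate k (optP k) → p = optP k) := by
  refine ⟨optP_mem_Ioo hk0 hk1, fun p hp => ?_, fun p hp heq => ?_⟩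
  · obtain ⟨c, hc, hdiff⟩ := exists_pos_necklaceRate_sub_optP_eq_mul_sq hk0 hk1 hp
    have : 0 ≤ c * (p - optP k) ^ 2 := by positivity
    linarith
  · obtain ⟨c, hc, hdiff⟩ := exists_pos_necklaceRate_sub_optP_eq_mul_sq hk0 hk1 hp
    rw [heq, sub_self, eq_comm, mul_eq_zero, or_iff_right hc.ne', sq_eq_zero_iff, sub_eq_zero]
      at hdiff
    exact hdiff
end

section
/- Define g(k) = (−k + √(k² − k + 1))/(1 − k) for k ∈ (0,1). Then g is strictly decreasing on (0,1), g(k) → 1 as k → 0⁺, and g(k) → 1/2 as k → 1⁻. -/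
/-!
Rationalizing, `g k = 1 / (k + √(k² - k + 1))` for every `k ≠ 1`. The denominator is continuous
and positive on all of `ℝ`, and strictly increasing because `√(k² - k + 1) = √((k - 1/2)² + 3/4)`
has slope greater than `-1`; both limits are then values of `1 / (k + √(k² - k + 1))`.
-/

open Filter Set Topology Real

lemma sq_sqrt_sq_sub_add_one (k : ℝ) : √(k ^ 2 - k + 1) ^ 2 = k ^ 2 - k + 1 :=
  sq_sqrt (by nlinarith [sq_nonneg (k - 1 / 2)])

lemma abs_sub_half_lt_sqrt (k : ℝ) : |k - 1 / 2| < √(k ^ 2 - k + 1) :=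
  abs_lt.mpr ⟨by linarith [lt_sqrt_of_sq_lt (x := 1 / 2 - k) (y := k ^ 2 - k + 1) (by nlinarith)],
    lt_sqrt_of_sq_lt (by nlinarith)⟩

lemma add_sqrt_pos (k : ℝ) : 0 < k + √(k ^ 2 - k + 1) := by
  linarith [abs_sub_half_lt_sqrt k, neg_abs_le (k - 1 / 2)]

lemma strictMono_add_sqrt : StrictMono fun k : ℝ => k + √(k ^ 2 - k + 1) := by
  intro a b hab
  set sa := √(a ^ 2 - a + 1)
  set sb := √(b ^ 2 - b + 1)
  have hsum : |a + b - 1| < sa + sb := by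
    calc |a + b - 1| = |(a - 1 / 2) + (b - 1 / 2)| := by ring_nf
      _ ≤ |a - 1 / 2| + |b - 1 / 2| := abs_add_le _ _
      _ < sa + sb := add_lt_add (abs_sub_half_lt_sqrt a) (abs_sub_half_lt_sqrt b)
  have hfactor : (b - a + (sb - sa)) * (sa + sb) = (b - a) * (a + b - 1 + (sa + sb)) := by
    linear_combination sq_sqrt_sq_sub_add_one b - sq_sqrt_sq_sub_add_one a
  have hpos : 0 < (b - a) * (a + b - 1 + (sa + sb)) :=
    mul_pos (sub_pos.mpr hab) (by linarith [neg_abs_le (a + b - 1)])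
  have hgap : 0 < b - a + (sb - sa) :=
    pos_of_mul_pos_left (hfactor ▸ hpos) (by linarith [abs_nonneg (a + b - 1)])
  show a + sa < b + sb
  linarith

lemma optP_eq_inv {k : ℝ} (hk : k ≠ 1) : optP k = (k + √(k ^ 2 - k + 1))⁻¹ := by
  have h1 : 1 - k ≠ 0 := sub_ne_zero.mpr hk.symm
  rw [optP, div_eq_iff h1, eq_comm, inv_mul_eq_div, div_eq_iff (add_sqrt_pos k).ne']
  linear_combination -sq_sqrt_sq_sub_add_one k

lemma tendsto_optP {l : Filter ℝ} {a : ℝ} (hl : l ≤ 𝓝 a) (hne : ∀ᶠ k in l, k ≠ 1) :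
    Tendsto optP l (𝓝 (a + √(a ^ 2 - a + 1))⁻¹) := by
  have hcont : Continuous fun k : ℝ => (k + √(k ^ 2 - k + 1))⁻¹ :=
    Continuous.inv₀ (by fun_prop) fun k => (add_sqrt_pos k).ne'
  refine (hcont.tendsto a |>.mono_left hl).congr' ?_
  filter_upwards [hne] with k hk
  exact (optP_eq_inv hk).symm

theorem stmt13 :
    StrictAntiOn optP (Set.Ioo (0 : ℝ) 1) ∧
    Filter.Tendsto optP (nhdsWithin 0 (Set.Ioi 0)) (nhds 1) ∧
    Filter.Tendsto optP (nhdsWithin 1 (Set.Iio 1)) (nhds (1 / 2)) := by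
  refine ⟨fun a ha b hb hab => ?_, ?_, ?_⟩
  · rw [optP_eq_inv ha.2.ne, optP_eq_inv hb.2.ne]
    exact inv_strictAnti₀ (add_sqrt_pos a) (strictMono_add_sqrt hab)
  · have hne : ∀ᶠ k in 𝓝[>] (0 : ℝ), k ≠ 1 :=
      mem_of_superset (Ioo_mem_nhdsGT one_pos) fun k hk => hk.2.ne
    simpa using tendsto_optP nhdsWithin_le_nhds hne
  · have hne : ∀ᶠ k in 𝓝[<] (1 : ℝ), k ≠ 1 :=
      mem_of_superset self_mem_nhdsWithin fun k hk => ne_of_lt hk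
    convert tendsto_optP nhdsWithin_le_nhds hne using 2
    norm_num
end

section
/- Let 0 < p < 1, q = 1 − p, n ≥ 3, and let P_n be the n×n row-stochastic matrix (rows and columns indexed by 0,…,n−1) with entries P_n(0,n−1) = 1; P_n(1,0) = q, P_n(1,n−1) = p; P_n(i,i−1) = 1 for 2 ≤ i ≤ n−1; and all other entries 0. Then the (n−1)-st matrix power P_n^{n−1} is the matrix Q with entries Q(0,1) = 1; Q(i,i) = p and Q(i,i+1) = q for 1 ≤ i ≤ n−2; Q(n−1,n−1) = p and Q(n−1,0) = q; and all other entries 0. -/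
/-- The necklace chain `P_n` of the "Comparison with other methods" example:
`P_n(0,n−1) = 1`; `P_n(1,0) = q`, `P_n(1,n−1) = p`; `P_n(i,i−1) = 1` for `2 ≤ i ≤ n−1`. -/
def Pmat (p q : ℝ) (n : ℕ) : Matrix (Fin n) (Fin n) ℝ :=
  Matrix.of fun i j =>
    if i.val = 0 then (if j.val = n - 1 then 1 else 0)
    else if i.val = 1 then (if j.val = 0 then q else if j.val = n - 1 then p else 0)
    else if j.val = i.val - 1 then 1 else 0

/-- The matrix `Q`: `Q(0,1) = 1`; `Q(i,i) = p`, `Q(i,i+1) = q` for `1 ≤ i ≤ n−2`;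
`Q(n−1,n−1) = p`, `Q(n−1,0) = q`. -/
def Qmat (p q : ℝ) (n : ℕ) : Matrix (Fin n) (Fin n) ℝ :=
  Matrix.of fun i j =>
    if i.val = 0 then (if j.val = 1 then 1 else 0)
    else if i.val = n - 1 then (if j.val = n - 1 then p else if j.val = 0 then q else 0)
    else if j.val = i.val then p else if j.val = i.val + 1 then q else 0

/-
Row `i` of `P_n ^ k` is the law after `k` steps of the chain started at `i`, which moves
deterministically `i ↦ i - 1` for `i ≥ 2` and `0 ↦ n - 1`, and branches only at `1`
(to `0` with probability `q`, to `n - 1` with probability `p`). In `n - 1` steps the chain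
passes through `1` at most once, so each row of `P_n ^ (n - 1)` is read off by descending to `1`,
branching once, and descending again.
-/

open Matrix

theorem Matrix.pow_succ_apply_eq_vecMul {ι R : Type*} [Fintype ι] [DecidableEq ι] [Semiring R]
    (M : Matrix ι ι R) (k : ℕ) (i : ι) : (M ^ (k + 1)) i = M i ᵥ* M ^ k := by
  rw [pow_succ', Matrix.mul_apply_eq_vecMul]

theorem Matrix.pow_succ_apply_of_apply_eq_single {ι R : Type*} [Fintype ι] [DecidableEq ι]
    [Semiring R] {M : Matrix ι ι R} {i j : ι} (h : M i = Pi.single j 1) (k : ℕ) :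
    (M ^ (k + 1)) i = (M ^ k) j := by
  rw [Matrix.pow_succ_apply_eq_vecMul, h, Matrix.single_one_vecMul]
  rfl

theorem Matrix.one_apply_eq_single {ι R : Type*} [DecidableEq ι] [Zero R] [One R] (i : ι) :
    (1 : Matrix ι ι R) i = Pi.single i 1 := by
  ext j
  exact Matrix.one_eq_pi_single

namespace Pmat

variable {p q : ℝ} {m : ℕ}

theorem apply_zero : Pmat p q (m + 1) 0 = Pi.single (Fin.last m) 1 := by
  ext j
  simp only [Pmat, Matrix.of_apply, Pi.single_apply, Fin.ext_iff, Fin.val_zero, Fin.val_last,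
    Nat.add_sub_cancel]
  split_ifs <;> rfl

theorem apply_of_val_eq_one {i : Fin (m + 1)} (hi : i.val = 1) :
    Pmat p q (m + 1) i = q • Pi.single 0 1 + p • Pi.single (Fin.last m) 1 := by
  ext j
  simp only [Pmat, Matrix.of_apply, hi, Pi.add_apply, Pi.smul_apply, Pi.single_apply,
    Fin.ext_iff, Fin.val_zero, Fin.val_last, smul_eq_mul, Nat.add_sub_cancel, one_ne_zero,
    ↓reduceIte]
  have := i.isLt
  split_ifs <;> first | omega | ring

theorem apply_of_val_eq_succ {i j : Fin (m + 1)} (hi : i.val = j.val + 1) (hj : j.val ≠ 0) :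
    Pmat p q (m + 1) i = Pi.single j 1 := by
  ext k
  simp only [Pmat, Matrix.of_apply, Pi.single_apply, Fin.ext_iff]
  split_ifs <;> first | rfl | omega

theorem pow_add_sub_apply (k : ℕ) {i j : Fin (m + 1)} (hi : i.val ≠ 0) (hij : i ≤ j) :
    (Pmat p q (m + 1) ^ (k + (j.val - i.val))) j = (Pmat p q (m + 1) ^ k) i := by
  obtain ⟨d, hd⟩ : ∃ d, j.val = i.val + d := ⟨j.val - i.val, by omega⟩
  induction d generalizing j with
  | zero => rw [Fin.ext (by omega : j.val = i.val), Nat.sub_self, add_zero]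
  | succ d ih =>
    have hj : j.val - 1 < m + 1 := by omega
    rw [show k + (j.val - i.val) = k + (j.val - 1 - i.val) + 1 by omega,
      Matrix.pow_succ_apply_of_apply_eq_single (apply_of_val_eq_succ (j := ⟨j.val - 1, hj⟩)
        (by dsimp only; omega) (by dsimp only; omega))]
    exact ih (Fin.mk_le_mk.mpr (by omega)) (by dsimp only; omega)

theorem pow_sub_apply_last {i : Fin (m + 1)} (hi : i.val ≠ 0) :
    (Pmat p q (m + 1) ^ (m - i.val)) (Fin.last m) = Pi.single i 1 := by
  simpa [Matrix.one_apply_eq_single] using pow_add_sub_apply (p := p) (q := q) 0 hi (Fin.le_last i)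

theorem pow_sub_apply_zero {i j : Fin (m + 1)} (hij : j.val = i.val + 1) :
    (Pmat p q (m + 1) ^ (m - i.val)) 0 = Pi.single j 1 := by
  have := j.isLt
  rw [show m - i.val = m - j.val + 1 by omega,
    Matrix.pow_succ_apply_of_apply_eq_single apply_zero]
  exact pow_sub_apply_last (by omega)

theorem pow_apply_of_ne_zero {i : Fin (m + 1)} (hi : i.val ≠ 0) :
    (Pmat p q (m + 1) ^ m) i = q • (Pmat p q (m + 1) ^ (m - i.val)) 0 + p • Pi.single i 1 := by
  have := i.isLt
  have h := pow_add_sub_apply (p := p) (q := q) (m - i.val + 1) (i := ⟨1, by omega⟩) (j := i)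
    one_ne_zero (Nat.one_le_iff_ne_zero.mpr hi)
  rw [show m - i.val + 1 + (i.val - 1) = m by omega] at h
  rw [h, Matrix.pow_succ_apply_eq_vecMul, apply_of_val_eq_one rfl, Matrix.add_vecMul,
    Matrix.smul_vecMul, Matrix.smul_vecMul, Matrix.single_one_vecMul, Matrix.single_one_vecMul,
    ← pow_sub_apply_last hi]
  rfl

end Pmat

namespace Qmat

variable {p q : ℝ} {m : ℕ}

theorem apply_of_val_eq_zero {i j : Fin (m + 1)} (hi : i.val = 0) (hj : j.val = 1) :
    Qmat p q (m + 1) i = Pi.single j 1 := by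
  ext k
  simp only [Qmat, Matrix.of_apply, Pi.single_apply, Fin.ext_iff, hi, hj, ↓reduceIte]

theorem apply_last {i : Fin (m + 1)} (hi0 : i.val ≠ 0) (him : i.val = m) :
    Qmat p q (m + 1) i = q • Pi.single 0 1 + p • Pi.single i 1 := by
  ext k
  simp only [Qmat, Matrix.of_apply, Pi.add_apply, Pi.smul_apply, Pi.single_apply, Fin.ext_iff,
    Fin.val_zero, smul_eq_mul, Nat.add_sub_cancel, him, ↓reduceIte]
  split_ifs <;> first | omega | ring

theorem apply_of_lt {i j : Fin (m + 1)} (hi0 : i.val ≠ 0) (him : i.val < m)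
    (hij : j.val = i.val + 1) :
    Qmat p q (m + 1) i = q • Pi.single j 1 + p • Pi.single i 1 := by
  ext k
  simp only [Qmat, Matrix.of_apply, Pi.add_apply, Pi.smul_apply, Pi.single_apply, Fin.ext_iff,
    smul_eq_mul, Nat.add_sub_cancel, hi0, hij, him.ne, ↓reduceIte]
  split_ifs <;> first | omega | ring

end Qmat

theorem stmt14_general (p q : ℝ) (n : ℕ) (hn : 3 ≤ n) :
    Pmat p q n ^ (n - 1) = Qmat p q n := by
  obtain ⟨m, rfl⟩ : ∃ m, n = m + 1 := ⟨n - 1, by omega⟩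
  rw [Nat.add_sub_cancel]
  funext i
  have hi := i.isLt
  obtain hi0 | hi0 := eq_or_ne i.val 0
  · obtain rfl : i = 0 := Fin.ext hi0
    rw [Qmat.apply_of_val_eq_zero (j := ⟨1, by omega⟩) hi0 rfl,
      ← Pmat.pow_sub_apply_zero (i := 0) rfl, Fin.val_zero, Nat.sub_zero]
  · rw [Pmat.pow_apply_of_ne_zero hi0]
    obtain him | him := eq_or_ne i.val m
    · rw [Qmat.apply_last hi0 him, him, Nat.sub_self, pow_zero, Matrix.one_apply_eq_single]
    · have hj : i.val + 1 < m + 1 := by omega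
      rw [Qmat.apply_of_lt (j := ⟨i.val + 1, hj⟩) hi0 (by omega) rfl,
        Pmat.pow_sub_apply_zero (j := ⟨i.val + 1, hj⟩) rfl]

theorem stmt14 (p q : ℝ) (hp0 : 0 < p) (hp1 : p < 1) (hq : q = 1 - p)
    (n : ℕ) (hn : 3 ≤ n) :
    Pmat p q n ^ (n - 1) = Qmat p q n :=
  stmt14_general p q n hn
end

section
/- Let 0 < p < 1, q = 1 − p, n ≥ 4, and let P_n be the n×n row-stochastic matrix with P_n(0,n−1) = 1; P_n(1,0) = q, P_n(1,n−1) = p; P_n(i,i−1) = 1 for 2 ≤ i ≤ n−1; all other entries 0. Let π be the stationary distribution of P_n (namely π(0) = q/(n−p) and π(i) = 1/(n−p) for 1 ≤ i ≤ n−1), let ←P_n(x,y) = π(y)P_n(y,x)/π(x) be the time reversal, and let M(P_n) = P_n·←P_n be the multiplicative symmetrization. Then 1 is an eigenvalue of M(P_n) of algebraic multiplicity at least 2; in particular, the second-largest eigenvalue of M(P_n) equals 1. -/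
/-- The stationary distribution of `P_n`: `π(0) = q/(n−p)`, `π(i) = 1/(n−p)` for `i ≥ 1`. -/
noncomputable def piP (p q : ℝ) (n : ℕ) : Fin n → ℝ :=
  fun x => if x.val = 0 then q / ((n : ℝ) - p) else 1 / ((n : ℝ) - p)

/-- The time reversal `←P(x,y) = π(y)P(y,x)/π(x)`. -/
noncomputable def timeReversal {n : ℕ} (P : Matrix (Fin n) (Fin n) ℝ) (π : Fin n → ℝ) :
    Matrix (Fin n) (Fin n) ℝ :=
  Matrix.of fun x y => π y * P y x / π x

/-- The multiplicative symmetrization `M(P) = P·←P`. -/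
noncomputable def multSymm {n : ℕ} (P : Matrix (Fin n) (Fin n) ℝ) (π : Fin n → ℝ) :
    Matrix (Fin n) (Fin n) ℝ :=
  P * timeReversal P π

open Polynomial
open scoped Matrix

theorem Matrix.pow_card_dvd_det_of_row_eq_smul_single {R ι : Type*} [CommRing R] [Fintype ι]
    [DecidableEq ι] (A : Matrix ι ι R) (s : Finset ι) (a : R)
    (h : ∀ i ∈ s, A i = a • Pi.single i 1) : a ^ s.card ∣ A.det := by
  set B := Matrix.of fun i => if i ∈ s then Pi.single i 1 else A i
  have hA : A = Matrix.diagonal (fun i => if i ∈ s then a else 1) * B := by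
    ext i j
    by_cases hi : i ∈ s
    · simp [B, hi, h i hi]
    · simp [B, hi]
  rw [hA, Matrix.det_mul, Matrix.det_diagonal, Finset.prod_ite_mem, Finset.univ_inter,
    Finset.prod_const]
  exact dvd_mul_right _ _

theorem Matrix.charmatrix_row_eq_of_row_eq_single {R ι : Type*} [CommRing R] [Fintype ι]
    [DecidableEq ι] (M : Matrix ι ι R) {i : ι} {c : R} (h : M i = Pi.single i c) :
    M.charmatrix i = (X - C c) • Pi.single i 1 := by
  ext j : 1
  by_cases hij : i = j
  · subst hij; simp [h]
  · simp [Matrix.charmatrix_apply_ne _ _ _ hij, h, Ne.symm hij]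

theorem multSymm_row_eq_single {n : ℕ} (P : Matrix (Fin n) (Fin n) ℝ) (π : Fin n → ℝ)
    {x y : Fin n} (hrow : P x = Pi.single y 1) (hcol : Pᵀ y = Pi.single x 1) :
    multSymm P π x = Pi.single x (π x / π y) := by
  ext z
  have hPzy : P z y = (Pi.single x 1 : Fin n → ℝ) z := congrFun hcol z
  simp only [multSymm, timeReversal, Matrix.mul_apply, Matrix.of_apply, hrow]
  rw [Finset.sum_eq_single y (fun w _ hw => by simp [hw]) (by simp), hPzy]
  by_cases hzx : z = x
  · subst hzx; simp
  · simp [hzx]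

theorem Pmat_row_of_two_le (p q : ℝ) {n : ℕ} (i : Fin n) (hi : 2 ≤ i.val) :
    Pmat p q n i = Pi.single ⟨i.val - 1, by omega⟩ 1 := by
  ext j
  simp only [Pmat, Matrix.of_apply, Pi.single_apply, Fin.ext_iff]
  rw [if_neg (by omega), if_neg (by omega)]

theorem Pmat_transpose_row_pred_of_two_le (p q : ℝ) {n : ℕ} (i : Fin n) (hi : 2 ≤ i.val) :
    (Pmat p q n)ᵀ ⟨i.val - 1, by omega⟩ = Pi.single i 1 := by
  ext z
  simp only [Matrix.transpose_apply, Pmat, Matrix.of_apply, Pi.single_apply, Fin.ext_iff]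
  have := i.isLt
  split_ifs <;> first | rfl | omega

theorem multSymm_Pmat_row_of_two_le (p q : ℝ) (hp1 : p < 1) {n : ℕ} (i : Fin n)
    (hi : 2 ≤ i.val) : multSymm (Pmat p q n) (piP p q n) i = Pi.single i 1 := by
  have hnp : (n : ℝ) - p ≠ 0 := by
    have : (1 : ℝ) ≤ n := by exact_mod_cast (show 1 ≤ n by omega)
    linarith
  rw [multSymm_row_eq_single _ _ (Pmat_row_of_two_le p q i hi)
    (Pmat_transpose_row_pred_of_two_le p q i hi)]
  simp only [piP]
  rw [if_neg (by omega), if_neg (by omega), div_self (one_div_ne_zero hnp)]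

theorem stmt15_general (p q : ℝ) (hp1 : p < 1)
    (n : ℕ) (hn : 4 ≤ n) :
    2 ≤ (Matrix.charpoly (multSymm (Pmat p q n) (piP p q n))).rootMultiplicity 1 := by
  set M := multSymm (Pmat p q n) (piP p q n)
  let s : Finset (Fin n) := {⟨2, by omega⟩, ⟨3, by omega⟩}
  have hs : s.card = 2 := Finset.card_pair (by simp [Fin.ext_iff])
  have hrows : ∀ i ∈ s, M.charmatrix i = (X - C 1 : ℝ[X]) • Pi.single i 1 := by
    intro i hi
    refine Matrix.charmatrix_row_eq_of_row_eq_single M (multSymm_Pmat_row_of_two_le p q hp1 i ?_)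
    simp only [s, Finset.mem_insert, Finset.mem_singleton] at hi
    rcases hi with rfl | rfl <;> simp
  rw [Polynomial.le_rootMultiplicity_iff M.charpoly_monic.ne_zero, ← hs]
  exact Matrix.pow_card_dvd_det_of_row_eq_smul_single _ s _ hrows

/-- `1` is an eigenvalue of `M(P_n)` of algebraic multiplicity at least `2`
(so the second-largest eigenvalue of the reversible chain `M(P_n)` equals `1`). -/
theorem stmt15 (p q : ℝ) (hp0 : 0 < p) (hp1 : p < 1) (hq : q = 1 - p)
    (n : ℕ) (hn : 4 ≤ n) :
    2 ≤ (Matrix.charpoly (multSymm (Pmat p q n) (piP p q n))).rootMultiplicity 1 :=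
  stmt15_general p q hp1 n hn
end

section
/- Let 0 < p < 1, q = 1 − p, and for n ≥ 3 let K_n be the n×n tridiagonal row-stochastic matrix with K_n(0,0) = q, K_n(0,1) = p; K_n(i,i−1) = pq, K_n(i,i) = p²+q², K_n(i,i+1) = pq for 1 ≤ i ≤ n−2; K_n(n−1,n−2) = pq, K_n(n−1,n−1) = 1−pq. Let β_1(K_n) be the second-largest eigenvalue of K_n. Then there is a constant C > 0 (depending only on p) such that for all sufficiently large n, β_1(K_n) ≤ 1 − pqπ²/(2(n−1)²) + C/(n−1)⁴. -/
/-!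
`K_n` is reversible with respect to the weights `w = (q, 1, …, 1)`, with Dirichlet form
`pq ∑ₖ (F k - F (k+1))²`. An eigenvector `F` for `β ≠ 1` is therefore `w`-orthogonal to the
constants and satisfies `(1 - β) ∑ᵢ wᵢ Fᵢ² = pq ∑ₖ (F k - F (k+1))²`. Writing the variance as a sum
over pairs `i < j` and applying Cauchy–Schwarz along the path from `i` to `j` bounds
`∑ᵢ wᵢ Fᵢ²` by `n(n+1)/6` times the Dirichlet sum, so `1 - β ≥ 6pq/(n(n+1))`. Since `π² < 12`,
this beats `pqπ²/(2(n-1)²)` once `n ≥ 20`.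
-/

/-- The tridiagonal chain `K_n = M(P_n^{n−1})`: `K(0,0) = q`, `K(0,1) = p`;
`K(i,i−1) = pq`, `K(i,i) = p²+q²`, `K(i,i+1) = pq` for `1 ≤ i ≤ n−2`;
`K(n−1,n−2) = pq`, `K(n−1,n−1) = 1−pq`. -/
def Kmat (p q : ℝ) (n : ℕ) : Matrix (Fin n) (Fin n) ℝ :=
  Matrix.of fun i j =>
    if i.val = 0 then (if j.val = 0 then q else if j.val = 1 then p else 0)
    else if i.val = n - 1 then
      (if j.val = n - 2 then p * q else if j.val = n - 1 then 1 - p * q else 0)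
    else if j.val + 1 = i.val then p * q
    else if j.val = i.val then p ^ 2 + q ^ 2
    else if j.val = i.val + 1 then p * q else 0

open Finset Matrix Real

lemma sq_sub_le_mul_sum_sq_sub (F : ℕ → ℝ) {M i j : ℕ} (hij : i ≤ j) (hjM : j ≤ M) :
    (F i - F j) ^ 2 ≤ ((j : ℝ) - i) * ∑ k ∈ range M, (F k - F (k + 1)) ^ 2 := by
  have htel : F i - F j = ∑ k ∈ Ico i j, (F k - F (k + 1)) := by
    have := sum_range_sub' (fun k => F (i + k)) (j - i)
    rw [add_zero, add_tsub_cancel_of_le hij] at this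
    rw [sum_Ico_eq_sum_range]
    exact this.symm
  calc (F i - F j) ^ 2
      ≤ #(Ico i j) * ∑ k ∈ Ico i j, (F k - F (k + 1)) ^ 2 := htel ▸ sq_sum_le_card_mul_sum_sq
    _ ≤ ((j : ℝ) - i) * ∑ k ∈ range M, (F k - F (k + 1)) ^ 2 := by
      rw [Nat.card_Ico, Nat.cast_sub hij]
      gcongr
      · exact sub_nonneg.2 (Nat.cast_le.2 hij)
      · intro k hk
        simp only [mem_Ico, mem_range] at hk ⊢
        omega

lemma sum_range_sum_range_sub (n : ℕ) :
    ∑ j ∈ range n, ∑ i ∈ range j, ((j : ℝ) - i) = n * ((n : ℝ) ^ 2 - 1) / 6 := by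
  have hgauss : ∀ n : ℕ, ∑ i ∈ range n, (i : ℝ) = n * ((n : ℝ) - 1) / 2 := by
    intro n
    induction n with
    | zero => simp
    | succ n ih => rw [sum_range_succ, ih]; push_cast; ring
  induction n with
  | zero => simp
  | succ n ih =>
    rw [sum_range_succ, ih, sum_sub_distrib, sum_const, card_range, hgauss, nsmul_eq_mul]
    push_cast
    ring

lemma sum_range_sum_range_mul_sq_sub (u F : ℕ → ℝ) (n : ℕ) :
    ∑ j ∈ range n, ∑ i ∈ range j, u i * u j * (F i - F j) ^ 2
      = (∑ i ∈ range n, u i) * (∑ i ∈ range n, u i * F i ^ 2)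
        - (∑ i ∈ range n, u i * F i) ^ 2 := by
  induction n with
  | zero => simp
  | succ n ih =>
    have hexpand : ∀ i, u i * u n * (F i - F n) ^ 2
        = u n * (u i * F i ^ 2) - 2 * u n * F n * (u i * F i) + u n * F n ^ 2 * u i := by
      intro i; ring
    simp only [sum_range_succ _ n, ih, hexpand, sum_add_distrib, sum_sub_distrib, ← mul_sum]
    ring

theorem path_poincare (u F : ℕ → ℝ) (n : ℕ) (hu0 : ∀ i, 0 ≤ u i) (hu1 : ∀ i, u i ≤ 1)
    (hmean : ∑ i ∈ range n, u i * F i = 0) :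
    (∑ i ∈ range n, u i) * ∑ i ∈ range n, u i * F i ^ 2
      ≤ n * ((n : ℝ) ^ 2 - 1) / 6 * ∑ k ∈ range (n - 1), (F k - F (k + 1)) ^ 2 := by
  rw [← sub_zero (_ * _), ← zero_pow two_ne_zero, ← hmean, ← sum_range_sum_range_mul_sq_sub,
    ← sum_range_sum_range_sub, sum_mul]
  refine sum_le_sum fun j hj => ?_
  rw [sum_mul]
  refine sum_le_sum fun i hi => ?_
  have hij := (mem_range.1 hi).le
  have hjn : j ≤ n - 1 := by have := mem_range.1 hj; omega
  calc u i * u j * (F i - F j) ^ 2 ≤ 1 * (F i - F j) ^ 2 := by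
        gcongr
        exact mul_le_one₀ (hu1 i) (hu0 j) (hu1 j)
    _ ≤ _ := by rw [one_mul]; exact sq_sub_le_mul_sum_sq_sub F hij hjn

lemma Matrix.exists_mulVec_eq_smul_of_mem_spectrum {ι K : Type*} [Fintype ι] [DecidableEq ι]
    [Field K] {A : Matrix ι ι K} {β : K} (hβ : β ∈ spectrum K A) :
    ∃ v ≠ 0, A *ᵥ v = β • v := by
  rw [← Matrix.spectrum_toLin', ← Module.End.hasEigenvalue_iff_mem_spectrum] at hβ
  obtain ⟨v, hv⟩ := hβ.exists_hasEigenvector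
  exact ⟨v, hv.2, hv.apply_eq_smul⟩

section Kmat

variable {p q : ℝ} {m : ℕ}

lemma Kmat_mulVec_zero (f : Fin (m + 3) → ℝ) :
    (Kmat p q (m + 3) *ᵥ f) 0 = q * f 0 + p * f 1 := by
  have hrow : ∀ j : Fin (m + 3), Kmat p q (m + 3) 0 j * f j
      = (if j = 0 then q * f j else 0) + (if j = 1 then p * f j else 0) := by
    rintro ⟨j, hj⟩
    simp only [Kmat, Matrix.of_apply, Fin.ext_iff, Fin.val_zero, Fin.val_one]
    split_ifs <;> first | contradiction | omega | ring
  simp only [Matrix.mulVec, dotProduct, hrow, sum_add_distrib, sum_ite_eq', mem_univ, if_true]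

lemma Kmat_mulVec_last (f : Fin (m + 3) → ℝ) :
    (Kmat p q (m + 3) *ᵥ f) ⟨m + 2, by omega⟩
      = p * q * f ⟨m + 1, by omega⟩ + (1 - p * q) * f ⟨m + 2, by omega⟩ := by
  have hrow : ∀ j : Fin (m + 3), Kmat p q (m + 3) ⟨m + 2, by omega⟩ j * f j
      = (if j = ⟨m + 1, by omega⟩ then p * q * f j else 0)
        + (if j = ⟨m + 2, by omega⟩ then (1 - p * q) * f j else 0) := by
    rintro ⟨j, hj⟩
    simp only [Kmat, Matrix.of_apply, Fin.ext_iff]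
    split_ifs <;> first | contradiction | omega | ring
  simp only [Matrix.mulVec, dotProduct, hrow, sum_add_distrib, sum_ite_eq', mem_univ, if_true]

lemma Kmat_mulVec_succ (f : Fin (m + 3) → ℝ) {i : ℕ} (hi : i ≤ m) :
    (Kmat p q (m + 3) *ᵥ f) ⟨i + 1, by omega⟩
      = p * q * f ⟨i, by omega⟩ + (p ^ 2 + q ^ 2) * f ⟨i + 1, by omega⟩
        + p * q * f ⟨i + 2, by omega⟩ := by
  have hrow : ∀ j : Fin (m + 3), Kmat p q (m + 3) ⟨i + 1, by omega⟩ j * f j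
      = (if j = ⟨i, by omega⟩ then p * q * f j else 0)
        + (if j = ⟨i + 1, by omega⟩ then (p ^ 2 + q ^ 2) * f j else 0)
        + (if j = ⟨i + 2, by omega⟩ then p * q * f j else 0) := by
    rintro ⟨j, hj⟩
    simp only [Kmat, Matrix.of_apply, Fin.ext_iff]
    split_ifs <;> first | contradiction | omega | ring
  simp only [Matrix.mulVec, dotProduct, hrow, sum_add_distrib, sum_ite_eq', mem_univ, if_true]

end Kmat

/-- The eigenvalue equation `K_{m+3} F = β F` for a vector indexed by `ℕ`. -/
structure IsKmatEigenfunction (p q β : ℝ) (m : ℕ) (F : ℕ → ℝ) : Prop where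
  zero : q * F 0 + p * F 1 = β * F 0
  succ : ∀ i ≤ m, p * q * F i + (p ^ 2 + q ^ 2) * F (i + 1) + p * q * F (i + 2) = β * F (i + 1)
  last : p * q * F (m + 1) + (1 - p * q) * F (m + 2) = β * F (m + 2)

lemma isKmatEigenfunction_of_mulVec {p q β : ℝ} {m : ℕ} {f : Fin (m + 3) → ℝ}
    (hf : Kmat p q (m + 3) *ᵥ f = β • f) :
    IsKmatEigenfunction p q β m fun k => if h : k < m + 3 then f ⟨k, h⟩ else 0 where
  zero := by simpa [Kmat_mulVec_zero] using congrFun hf 0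
  succ i hi := by
    simpa [Kmat_mulVec_succ f hi, (by omega : i < m + 3), (by omega : i < m + 2), hi]
      using congrFun hf ⟨i + 1, by omega⟩
  last := by simpa [Kmat_mulVec_last] using congrFun hf ⟨m + 2, by omega⟩

/-- Reversibility of `K_{m+3}` with respect to the weights `(q, 1, …, 1)`, written row by row. -/
lemma kmat_summation_by_parts {p q : ℝ} (hpq : p + q = 1) (F G : ℕ → ℝ) (m : ℕ) :
    q * F 0 * G 0 + ∑ i ∈ range (m + 2), F (i + 1) * G (i + 1)
      - (q * (q * F 0 + p * F 1) * G 0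
        + ∑ i ∈ range (m + 1),
            (p * q * F i + (p ^ 2 + q ^ 2) * F (i + 1) + p * q * F (i + 2)) * G (i + 1)
        + (p * q * F (m + 1) + (1 - p * q) * F (m + 2)) * G (m + 2))
      = p * q * ∑ k ∈ range (m + 2), (F k - F (k + 1)) * (G k - G (k + 1)) := by
  obtain rfl : q = 1 - p := by linarith
  induction m with
  | zero =>
    simp only [sum_range_succ, sum_range_zero]
    ring
  | succ m ih =>
    rw [show m + 1 + 2 = m + 2 + 1 from rfl, sum_range_succ (fun i => F (i + 1) * G (i + 1)),
      sum_range_succ (fun k => (F k - F (k + 1)) * (G k - G (k + 1))),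
      sum_range_succ (fun i => (p * (1 - p) * F i + (p ^ 2 + (1 - p) ^ 2) * F (i + 1)
        + p * (1 - p) * F (i + 2)) * G (i + 1))]
    linear_combination ih

def kmatWeight (q : ℝ) (i : ℕ) : ℝ := if i = 0 then q else 1

lemma sum_range_kmatWeight_mul (q : ℝ) (g : ℕ → ℝ) (m : ℕ) :
    ∑ i ∈ range (m + 3), kmatWeight q i * g i = q * g 0 + ∑ i ∈ range (m + 2), g (i + 1) := by
  simp only [sum_range_succ' _ (m + 2), kmatWeight, if_pos, Nat.succ_ne_zero, if_false, one_mul]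
  ring

namespace IsKmatEigenfunction

variable {p q β : ℝ} {m : ℕ} {F : ℕ → ℝ}

theorem one_sub_mul_sum_kmatWeight (hpq : p + q = 1) (hF : IsKmatEigenfunction p q β m F) (G : ℕ → ℝ) :
    (1 - β) * ∑ i ∈ range (m + 3), kmatWeight q i * (F i * G i)
      = p * q * ∑ k ∈ range (m + 2), (F k - F (k + 1)) * (G k - G (k + 1)) := by
  have hmid : ∑ i ∈ range (m + 1),
      (p * q * F i + (p ^ 2 + q ^ 2) * F (i + 1) + p * q * F (i + 2)) * G (i + 1)
        = β * ∑ i ∈ range (m + 1), F (i + 1) * G (i + 1) := by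
    rw [mul_sum]
    refine sum_congr rfl fun i hi => ?_
    rw [hF.succ i (Nat.le_of_lt_succ (mem_range.1 hi)), mul_assoc]
  rw [← kmat_summation_by_parts hpq, hF.zero, hF.last, hmid, sum_range_kmatWeight_mul,
    sum_range_succ (fun i => F (i + 1) * G (i + 1)) (m + 1)]
  ring

theorem spectral_gap (hp : 0 < p) (hq : 0 < q) (hpq : p + q = 1)
    (hF : IsKmatEigenfunction p q β m F) (hβ : β ≠ 1) (hF0 : ∃ i < m + 3, F i ≠ 0) :
    6 * (p * q) ≤ ((m : ℝ) + 3) * ((m : ℝ) + 4) * (1 - β) := by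
  set Q := ∑ i ∈ range (m + 3), kmatWeight q i * F i ^ 2
  set D := ∑ k ∈ range (m + 2), (F k - F (k + 1)) ^ 2
  have hw0 : ∀ i, 0 ≤ kmatWeight q i := fun i => by unfold kmatWeight; split_ifs <;> linarith
  have hw1 : ∀ i, kmatWeight q i ≤ 1 := fun i => by unfold kmatWeight; split_ifs <;> linarith
  have hmean : ∑ i ∈ range (m + 3), kmatWeight q i * F i = 0 := by
    have h := hF.one_sub_mul_sum_kmatWeight hpq fun _ => 1
    simp only [mul_one, sub_self, mul_zero, sum_const_zero] at h
    exact (mul_eq_zero.1 h).resolve_left (sub_ne_zero.2 hβ.symm)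
  have henergy : (1 - β) * Q = p * q * D := by
    simpa only [Q, D, sq] using hF.one_sub_mul_sum_kmatWeight hpq F
  have hQ : 0 < Q := by
    obtain ⟨i, hi, hFi⟩ := hF0
    refine sum_pos' (fun j _ => mul_nonneg (hw0 j) (sq_nonneg _)) ⟨i, mem_range.2 hi, ?_⟩
    have : 0 < kmatWeight q i := by unfold kmatWeight; split_ifs <;> norm_num [hq]
    positivity
  have hpoincare := path_poincare (kmatWeight q) F (m + 3) hw0 hw1 hmean
  have hweight : ∑ i ∈ range (m + 3), kmatWeight q i = q + ((m : ℝ) + 2) := by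
    simpa [add_comm] using sum_range_kmatWeight_mul q (fun _ => 1) m
  rw [hweight] at hpoincare
  push_cast at hpoincare
  have hQD : 6 * Q ≤ ((m : ℝ) + 3) * ((m : ℝ) + 4) * D := by
    nlinarith [mul_pos hq hQ]
  refine le_of_mul_le_mul_right ?_ hQ
  calc 6 * (p * q) * Q = p * q * (6 * Q) := by ring
    _ ≤ p * q * (((m : ℝ) + 3) * ((m : ℝ) + 4) * D) := by gcongr
    _ = ((m : ℝ) + 3) * ((m : ℝ) + 4) * (1 - β) * Q := by rw [mul_assoc _ (1 - β), henergy]; ring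

end IsKmatEigenfunction

lemma pi_sq_mul_le {x : ℝ} (hx : 20 ≤ x) : π ^ 2 * (x * (x + 1)) ≤ 12 * (x - 1) ^ 2 := by
  have hπ : π ^ 2 < 10 := by nlinarith [pi_lt_d2, pi_pos]
  nlinarith

/-- Every eigenvalue of `K_n` other than `1` (in particular the second-largest eigenvalue
`β₁(K_n)`) is at most `1 − pqπ²/(2(n−1)²) + C/(n−1)⁴` for large `n`, where `C` depends
only on `p`. -/
theorem stmt18 (p q : ℝ) (hp0 : 0 < p) (hp1 : p < 1) (hq : q = 1 - p) :
    ∃ C : ℝ, 0 < C ∧ ∃ N : ℕ, ∀ n : ℕ, N ≤ n →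
      ∀ β ∈ spectrum ℝ (Kmat p q n), β ≠ 1 →
        β ≤ 1 - p * q * Real.pi ^ 2 / (2 * ((n : ℝ) - 1) ^ 2) + C / ((n : ℝ) - 1) ^ 4 := by
  refine ⟨1, one_pos, 20, fun n hn β hβ hβ1 => ?_⟩
  obtain ⟨m, rfl⟩ : ∃ m, n = m + 3 := ⟨n - 3, by omega⟩
  obtain ⟨f, hf0, hf⟩ := Matrix.exists_mulVec_eq_smul_of_mem_spectrum hβ
  have hgap := (isKmatEigenfunction_of_mulVec hf).spectral_gap hp0 (by linarith) (by linarith) hβ1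
    (by obtain ⟨i, hi⟩ := Function.ne_iff.1 hf0; exact ⟨i, i.isLt, by simpa using hi⟩)
  have hx : (20 : ℝ) ≤ (m : ℝ) + 3 := by exact_mod_cast hn
  have hpi := pi_sq_mul_le hx
  have hpq : 0 < p * q := mul_pos hp0 (by linarith)
  have hdiv : p * q * π ^ 2 / (2 * (((m + 3 : ℕ) : ℝ) - 1) ^ 2) ≤ 1 - β := by
    push_cast
    rw [div_le_iff₀ (by nlinarith)]
    nlinarith [mul_le_mul_of_nonneg_left hpi hpq.le, hgap]
  have : (0 : ℝ) < 1 / (((m + 3 : ℕ) : ℝ) - 1) ^ 4 := by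
    push_cast
    exact one_div_pos.2 (pow_pos (by linarith) 4)
  linarith
end
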